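/- arXiv:math/0609075 — 4 statements merged into one kernel-verified Lean document; each statement's English description precedes it below -/
import Mathlib

section
/- Let Γ be a graph in [l] whose graphic arrangement A(Γ) has rank greater than 2. Then β_3(Γ) ≤ 1; equivalently, the 𝔽_3-vector space of 3-cocycles η : A(Γ) → 𝔽_3 has dimension at most 2. -/
open scoped Classical

noncomputable section

/-- A (candidate) hyperplane in `ℂ^l`: a submodule of `Fin l → ℂ`. -/
abbrev Hyp (l : ℕ) := Submodule ℂ (Fin l → ℂ)

/-- `X` is a rank-2 flat of the central arrangement `A`. -/
def IsRank2Flat {l : ℕ} (A : Finset (Hyp l)) (X : Hyp l) : Prop :=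
  ∃ H ∈ A, ∃ K ∈ A, H ≠ K ∧ X = H ⊓ K

/-- The hyperplanes of `A` containing the flat `X` (so `m_X = (flatHyps A X).card`). -/
def flatHyps {l : ℕ} (A : Finset (Hyp l)) (X : Hyp l) : Finset {H // H ∈ A} :=
  A.attach.filter fun L => X ≤ (L : Hyp l)

/-- `η : A → 𝔽_p` is a `p`-cocycle: for every rank-2 flat `X`, the sum of `η` over `A_X`
vanishes when `p ∣ m_X`, and `η` is constant on `A_X` when `p ∤ m_X`. -/
def IsCocycle {l : ℕ} (p : ℕ) (A : Finset (Hyp l)) (η : {H // H ∈ A} → ZMod p) : Prop :=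
  ∀ X : Hyp l, IsRank2Flat A X →
    ((p ∣ (flatHyps A X).card → ∑ L ∈ flatHyps A X, η L = 0) ∧
     (¬ p ∣ (flatHyps A X).card →
       ∀ H ∈ flatHyps A X, ∀ K ∈ flatHyps A X, η H = η K))

/-- The rank of a central arrangement in `ℂ^l`: the codimension of the intersection of
all its hyperplanes. -/
def arrRank {l : ℕ} (A : Finset (Hyp l)) : ℕ :=
  l - Module.finrank ℂ ↥(A.inf id)

/-- A graph `Γ` in `[l]`: loops `E₁(Γ) ⊆ [l]`, and signed edges `ij^ε` (recorded with
`i < j`, the sign `ε` encoded by a `Bool`: `true ↦ +1`, `false ↦ -1`); a pair `{i,j}`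
may carry one signed edge (a simple edge) or both (a double edge). -/
structure SGraph (l : ℕ) where
  loops : Finset (Fin l)
  edges : Finset (Fin l × Fin l × Bool)
  edges_lt : ∀ e ∈ edges, e.1 < e.2.1

/-- The hyperplane `x_i = 0` of a loop at `i`. -/
def loopHyp {l : ℕ} (i : Fin l) : Hyp l :=
  LinearMap.ker (LinearMap.proj i : (Fin l → ℂ) →ₗ[ℂ] ℂ)

/-- The hyperplane `x_i + ε·x_j = 0` of a signed edge `ij^ε`. -/
def edgeHyp {l : ℕ} (i j : Fin l) (b : Bool) : Hyp l :=
  LinearMap.ker ((LinearMap.proj i : (Fin l → ℂ) →ₗ[ℂ] ℂ)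
    + (if b then (1 : ℂ) else -1) • (LinearMap.proj j : (Fin l → ℂ) →ₗ[ℂ] ℂ))

/-- The graphic arrangement `A(Γ)` in `ℂ^l`. -/
def graphArr {l : ℕ} (G : SGraph l) : Finset (Hyp l) :=
  G.loops.image loopHyp ∪ G.edges.image fun e => edgeHyp e.1 e.2.1 e.2.2

/-- The (unordered) signed edge `ij^ε` belongs to `Γ`. -/
def SGraph.hasEdge {l : ℕ} (G : SGraph l) (i j : Fin l) (b : Bool) : Prop :=
  (i, j, b) ∈ G.edges ∨ (j, i, b) ∈ G.edges

/-- The `𝔽_p`-vector space of `p`-cocycles `η : A → 𝔽_p`. -/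
def cocycleSubmodule {l : ℕ} (p : ℕ) (A : Finset (Hyp l)) :
    Submodule (ZMod p) ({H // H ∈ A} → ZMod p) where
  carrier := {η | IsCocycle p A η}
  zero_mem' := by
    intro X hX
    exact ⟨fun _ => by simp, fun _ H _ K _ => rfl⟩
  add_mem' := by
    intro a b ha hb X hX
    refine ⟨fun h => ?_, fun h H hH K hK => ?_⟩
    · have h1 := (ha X hX).1 h
      have h2 := (hb X hX).1 h
      simp only [Pi.add_apply, Finset.sum_add_distrib, h1, h2, add_zero]
    · have h1 := (ha X hX).2 h H hH K hK
      have h2 := (hb X hX).2 h H hH K hK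
      simp [Pi.add_apply, h1, h2]
  smul_mem' := by
    intro c a ha X hX
    refine ⟨fun h => ?_, fun h H hH K hK => ?_⟩
    · have h1 := (ha X hX).1 h
      simp only [Pi.smul_apply, smul_eq_mul, ← Finset.mul_sum, h1, mul_zero]
    · have h1 := (ha X hX).2 h H hH K hK
      simp [Pi.smul_apply, h1]

namespace Beta3

variable {l : ℕ}

/-- The sign of a bool, as a complex number. -/
def sgn (b : Bool) : ℂ := if b then 1 else -1

lemma sgn_ne_zero (b : Bool) : sgn b ≠ 0 := by cases b <;> simp [sgn]

lemma sgn_mul_self (b : Bool) : sgn b * sgn b = 1 := by cases b <;> norm_num [sgn]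

lemma sgn_inj {b b' : Bool} (h : sgn b = sgn b') : b = b' := by
  cases b <;> cases b' <;> simp_all [sgn] <;> norm_num at h

lemma sgn_xor (b b' : Bool) : sgn (xor b b') = -(sgn b * sgn b') := by
  cases b <;> cases b' <;> norm_num [sgn]

/-- standard basis vector -/
def ev (t : Fin l) : Fin l → ℂ := fun m => if m = t then 1 else 0

/-- vector supported on two coordinates -/
def wv (u v : Fin l) (c : ℂ) : Fin l → ℂ := fun m => if m = u then 1 else if m = v then c else 0

/-- vector supported on three coordinates -/
def wv3 (a s b : Fin l) (c d : ℂ) : Fin l → ℂ :=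
  fun m => if m = a then 1 else if m = s then c else if m = b then d else 0

lemma mem_loopHyp {i : Fin l} {x : Fin l → ℂ} : x ∈ loopHyp i ↔ x i = 0 := by
  simp [loopHyp, LinearMap.mem_ker]

lemma mem_edgeHyp {i j : Fin l} {b : Bool} {x : Fin l → ℂ} :
    x ∈ edgeHyp i j b ↔ x i + sgn b * x j = 0 := by
  cases b <;>
    simp [edgeHyp, LinearMap.mem_ker, sgn, LinearMap.add_apply, LinearMap.smul_apply,
      smul_eq_mul, neg_mul]

lemma edgeHyp_symm (i j : Fin l) (b : Bool) : edgeHyp i j b = edgeHyp j i b := by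
  ext x
  rw [mem_edgeHyp, mem_edgeHyp]
  constructor <;> intro h
  · linear_combination sgn b * h - x j * sgn_mul_self b
  · linear_combination sgn b * h - x i * sgn_mul_self b

lemma loopHyp_injective {i j : Fin l} (h : loopHyp i = loopHyp j) : i = j := by
  by_contra hne
  have h1 : ev j ∈ loopHyp i := by simp [mem_loopHyp, ev, hne]
  rw [h, mem_loopHyp] at h1
  simp [ev] at h1

lemma loopHyp_ne_edgeHyp {m u v : Fin l} (huv : u ≠ v) (b : Bool) :
    loopHyp m ≠ edgeHyp u v b := by
  intro h
  by_cases hmu : m = u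
  · subst hmu
    have h1 : ev v ∈ loopHyp m := by simp [mem_loopHyp, ev, huv]
    rw [h, mem_edgeHyp] at h1
    simp [ev, huv] at h1
    exact sgn_ne_zero b h1
  · have h1 : ev u ∈ loopHyp m := by simp [mem_loopHyp, ev, hmu]
    rw [h, mem_edgeHyp] at h1
    simp [ev, Ne.symm huv] at h1

lemma wv_mem_edgeHyp {u v : Fin l} (huv : u ≠ v) (b : Bool) :
    wv u v (-sgn b) ∈ edgeHyp u v b := by
  rw [mem_edgeHyp]
  simp [wv, huv, Ne.symm huv]
  linear_combination - sgn_mul_self b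

lemma edgeHyp_sign_inj {i j : Fin l} (hij : i ≠ j) {b b' : Bool}
    (h : edgeHyp i j b = edgeHyp i j b') : b = b' := by
  have h1 := wv_mem_edgeHyp hij b
  rw [h, mem_edgeHyp] at h1
  simp [wv, hij, Ne.symm hij] at h1
  apply sgn_inj
  have h2 : sgn b' * sgn b = 1 := by linear_combination -h1
  have := sgn_mul_self b'
  have h3 : sgn b' * (sgn b - sgn b') = 0 := by linear_combination h2 - this
  rcases mul_eq_zero.1 h3 with h4 | h4
  · exact absurd h4 (sgn_ne_zero b')
  · linear_combination h4

lemma vertex_mem {i j u v : Fin l} {b b' : Bool} (hij : i ≠ j)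
    (h : edgeHyp i j b = edgeHyp u v b') : i = u ∨ i = v := by
  by_contra hc
  push_neg at hc
  have h1 : ev i ∈ edgeHyp u v b' := by
    rw [mem_edgeHyp]; simp [ev, Ne.symm hc.1, Ne.symm hc.2]
  rw [← h, mem_edgeHyp] at h1
  simp [ev, Ne.symm hij] at h1

/-- Edges whose vertex pairs differ (as sets) give different hyperplanes. -/
lemma edgeHyp_ne_of_pairs {i j u v : Fin l} (hij : i ≠ j) (b b' : Bool)
    (hnotsub : ¬ ((i = u ∧ j = v) ∨ (i = v ∧ j = u))) :
    edgeHyp i j b ≠ edgeHyp u v b' := by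
  intro h
  have hi := vertex_mem hij h
  have hj := vertex_mem (Ne.symm hij) ((edgeHyp_symm i j b) ▸ h)
  rcases hi with hi | hi <;> rcases hj with hj | hj
  · exact hij (hi.trans hj.symm)
  · exact hnotsub (Or.inl ⟨hi, hj⟩)
  · exact hnotsub (Or.inr ⟨hi, hj⟩)
  · exact hij (hi.trans hj.symm)

end Beta3
namespace Beta3

variable {l : ℕ}

lemma ev_self (t : Fin l) : ev t t = 1 := by simp [ev]
lemma ev_ne {t m : Fin l} (h : m ≠ t) : ev t m = 0 := by simp [ev, h]
lemma wv_a (u v : Fin l) (c : ℂ) : wv u v c u = 1 := by simp [wv]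
lemma wv_b {u v : Fin l} (h : v ≠ u) (c : ℂ) : wv u v c v = c := by simp [wv, h]
lemma wv_o {u v t : Fin l} (h1 : t ≠ u) (h2 : t ≠ v) (c : ℂ) : wv u v c t = 0 := by
  simp [wv, h1, h2]
lemma wv3_a (a s b : Fin l) (c d : ℂ) : wv3 a s b c d a = 1 := by simp [wv3]
lemma wv3_s {a s : Fin l} (b : Fin l) (h : s ≠ a) (c d : ℂ) : wv3 a s b c d s = c := by
  simp [wv3, h]
lemma wv3_b {a s b : Fin l} (h1 : b ≠ a) (h2 : b ≠ s) (c d : ℂ) : wv3 a s b c d b = d := by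
  simp [wv3, h1, h2]
lemma wv3_o {a s b t : Fin l} (h1 : t ≠ a) (h2 : t ≠ s) (h3 : t ≠ b) (c d : ℂ) :
    wv3 a s b c d t = 0 := by simp [wv3, h1, h2, h3]

lemma mem_graphArr {G : SGraph l} {H : Hyp l} :
    H ∈ graphArr G ↔ (∃ i ∈ G.loops, H = loopHyp i) ∨
      (∃ e ∈ G.edges, H = edgeHyp e.1 e.2.1 e.2.2) := by
  simp [graphArr, Finset.mem_union, Finset.mem_image, eq_comm]

/-- S1: a hyperplane of the arrangement containing the pair flat `x_i = x_j = 0`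
is one of the (at most four) hyperplanes supported on `{i,j}`. -/
lemma S1 {G : SGraph l} {i j : Fin l} (hij : i ≠ j) {L : Hyp l} (hL : L ∈ graphArr G)
    (hs : ∀ t, t ≠ i → t ≠ j → ev t ∈ L) :
    L = loopHyp i ∨ L = loopHyp j ∨ L = edgeHyp i j true ∨ L = edgeHyp i j false := by
  rcases mem_graphArr.1 hL with ⟨m, _, rfl⟩ | ⟨⟨p, q, d⟩, he, rfl⟩
  · by_cases hmi : m = i
    · exact Or.inl (by rw [hmi])
    · by_cases hmj : m = j
      · exact Or.inr (Or.inl (by rw [hmj]))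
      · have := hs m hmi hmj
        rw [mem_loopHyp, ev_self] at this
        exact absurd this one_ne_zero
  · simp only at *
    have hpq : p ≠ q := ne_of_lt (G.edges_lt _ he)
    have hp : p = i ∨ p = j := by
      by_contra hc
      push_neg at hc
      have := hs p hc.1 hc.2
      rw [mem_edgeHyp, ev_self, ev_ne (Ne.symm hpq)] at this
      simp at this
    have hq : q = i ∨ q = j := by
      by_contra hc
      push_neg at hc
      have := hs q hc.1 hc.2
      rw [mem_edgeHyp, ev_self, ev_ne hpq] at this
      simp at this
      exact sgn_ne_zero d this
    rcases hp with rfl | rfl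
    · rcases hq with rfl | rfl
      · exact absurd rfl hpq
      · rcases d with _ | _
        · exact Or.inr (Or.inr (Or.inr rfl))
        · exact Or.inr (Or.inr (Or.inl rfl))
    · rcases hq with rfl | rfl
      · rw [edgeHyp_symm]
        rcases d with _ | _
        · exact Or.inr (Or.inr (Or.inr rfl))
        · exact Or.inr (Or.inr (Or.inl rfl))
      · exact absurd rfl hpq

/-- S2: hyperplanes containing (loop m) ⊓ (edge u v γ), all vertices distinct. -/
lemma S2 {G : SGraph l} {m u v : Fin l} (hmu : m ≠ u) (hmv : m ≠ v) (huv : u ≠ v)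
    (γ : Bool) {L : Hyp l} (hL : L ∈ graphArr G)
    (hs : ∀ t, t ≠ m → t ≠ u → t ≠ v → ev t ∈ L)
    (hz : wv u v (-sgn γ) ∈ L) :
    L = loopHyp m ∨ L = edgeHyp u v γ := by
  rcases mem_graphArr.1 hL with ⟨n, _, rfl⟩ | ⟨⟨p, q, d⟩, he, rfl⟩
  · by_cases hnm : n = m
    · exact Or.inl (by rw [hnm])
    exfalso
    rw [mem_loopHyp] at hz
    by_cases hnu : n = u
    · rw [hnu, wv_a] at hz; exact one_ne_zero hz
    by_cases hnv : n = v
    · rw [hnv, wv_b (Ne.symm huv)] at hz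
      exact sgn_ne_zero γ (neg_eq_zero.1 hz)
    · have := hs n hnm hnu hnv
      rw [mem_loopHyp, ev_self] at this
      exact one_ne_zero this
  · simp only at *
    have hpq : p ≠ q := ne_of_lt (G.edges_lt _ he)
    have hp : p = m ∨ p = u ∨ p = v := by
      by_contra hc; push_neg at hc
      have := hs p hc.1 hc.2.1 hc.2.2
      rw [mem_edgeHyp, ev_self, ev_ne (Ne.symm hpq)] at this
      simp at this
    have hq : q = m ∨ q = u ∨ q = v := by
      by_contra hc; push_neg at hc
      have := hs q hc.1 hc.2.1 hc.2.2
      rw [mem_edgeHyp, ev_self, ev_ne hpq] at this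
      simp at this
      exact sgn_ne_zero d this
    rw [mem_edgeHyp] at hz
    rcases hp with hp | hp | hp <;> rcases hq with hq | hq | hq <;>
        rw [hp, hq] at hz hpq ⊢
    · exact absurd rfl hpq
    · exfalso
      rw [wv_o hmu hmv, wv_a] at hz
      exact sgn_ne_zero d (by linear_combination hz)
    · exfalso
      rw [wv_o hmu hmv, wv_b (Ne.symm huv)] at hz
      exact mul_ne_zero (sgn_ne_zero d) (sgn_ne_zero γ) (by linear_combination -hz)
    · exfalso
      rw [wv_a, wv_o hmu hmv] at hz
      exact one_ne_zero (by linear_combination hz)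
    · exact absurd rfl hpq
    · right
      rw [wv_a, wv_b (Ne.symm huv)] at hz
      have hd : d = γ := by
        apply sgn_inj
        have e := sgn_mul_self γ
        linear_combination (-sgn γ) * hz - sgn d * e
      rw [hd]
    · exfalso
      rw [wv_b (Ne.symm huv), wv_o hmu hmv] at hz
      exact sgn_ne_zero γ (by linear_combination -hz)
    · right
      rw [wv_b (Ne.symm huv), wv_a] at hz
      have hd : d = γ := by
        apply sgn_inj
        linear_combination hz
      rw [hd, edgeHyp_symm]
    · exact absurd rfl hpq

/-- S3: hyperplanes containing the intersection of two disjoint edges. -/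
lemma S3 {G : SGraph l} {i j u v : Fin l} (hij : i ≠ j) (huv : u ≠ v)
    (hiu : i ≠ u) (hiv : i ≠ v) (hju : j ≠ u) (hjv : j ≠ v)
    (ε γ : Bool) {L : Hyp l} (hL : L ∈ graphArr G)
    (hs : ∀ t, t ≠ i → t ≠ j → t ≠ u → t ≠ v → ev t ∈ L)
    (hy : wv i j (-sgn ε) ∈ L) (hz : wv u v (-sgn γ) ∈ L) :
    L = edgeHyp i j ε ∨ L = edgeHyp u v γ := by
  rcases mem_graphArr.1 hL with ⟨n, _, rfl⟩ | ⟨⟨p, q, d⟩, he, rfl⟩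
  · exfalso
    rw [mem_loopHyp] at hy hz
    by_cases hni : n = i
    · rw [hni, wv_a] at hy; exact one_ne_zero hy
    by_cases hnj : n = j
    · rw [hnj, wv_b (Ne.symm hij)] at hy; exact sgn_ne_zero ε (neg_eq_zero.1 hy)
    by_cases hnu : n = u
    · rw [hnu, wv_a] at hz; exact one_ne_zero hz
    by_cases hnv : n = v
    · rw [hnv, wv_b (Ne.symm huv)] at hz; exact sgn_ne_zero γ (neg_eq_zero.1 hz)
    · have := hs n hni hnj hnu hnv
      rw [mem_loopHyp, ev_self] at this
      exact one_ne_zero this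
  · simp only at *
    have hpq : p ≠ q := ne_of_lt (G.edges_lt _ he)
    have hp : p = i ∨ p = j ∨ p = u ∨ p = v := by
      by_contra hc; push_neg at hc
      have := hs p hc.1 hc.2.1 hc.2.2.1 hc.2.2.2
      rw [mem_edgeHyp, ev_self, ev_ne (Ne.symm hpq)] at this
      simp at this
    have hq : q = i ∨ q = j ∨ q = u ∨ q = v := by
      by_contra hc; push_neg at hc
      have := hs q hc.1 hc.2.1 hc.2.2.1 hc.2.2.2
      rw [mem_edgeHyp, ev_self, ev_ne hpq] at this
      simp at this
      exact sgn_ne_zero d this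
    rw [mem_edgeHyp] at hy hz
    rcases hp with hp | hp | hp | hp <;> rcases hq with hq | hq | hq | hq <;>
        rw [hp, hq] at hy hz hpq ⊢
    · exact absurd rfl hpq
    · -- (i,j) : match with first edge
      left
      rw [wv_a, wv_b (Ne.symm hij)] at hy
      have hd : d = ε := by
        apply sgn_inj
        linear_combination (-sgn ε) * hy - sgn d * sgn_mul_self ε
      rw [hd]
    · exfalso; rw [wv_a, wv_o (Ne.symm hiu) (Ne.symm hju)] at hy
      exact one_ne_zero (by linear_combination hy)
    · exfalso; rw [wv_a, wv_o (Ne.symm hiv) (Ne.symm hjv)] at hy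
      exact one_ne_zero (by linear_combination hy)
    · -- (j,i)
      left
      rw [wv_b (Ne.symm hij), wv_a] at hy
      have hd : d = ε := by apply sgn_inj; linear_combination hy
      rw [hd, edgeHyp_symm]
    · exact absurd rfl hpq
    · exfalso; rw [wv_b (Ne.symm hij), wv_o (Ne.symm hiu) (Ne.symm hju)] at hy
      exact sgn_ne_zero ε (by linear_combination -hy)
    · exfalso; rw [wv_b (Ne.symm hij), wv_o (Ne.symm hiv) (Ne.symm hjv)] at hy
      exact sgn_ne_zero ε (by linear_combination -hy)
    · exfalso; rw [wv_o hiu hiv, wv_a] at hz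
      exact one_ne_zero (by linear_combination hz)
    · exfalso; rw [wv_o hju hjv, wv_a] at hz
      exact one_ne_zero (by linear_combination hz)
    · exact absurd rfl hpq
    · -- (u,v)
      right
      rw [wv_a, wv_b (Ne.symm huv)] at hz
      have hd : d = γ := by
        apply sgn_inj
        linear_combination (-sgn γ) * hz - sgn d * sgn_mul_self γ
      rw [hd]
    · exfalso; rw [wv_o hiu hiv, wv_b (Ne.symm huv)] at hz
      exact sgn_ne_zero γ (by linear_combination -hz)
    · exfalso; rw [wv_o hju hjv, wv_b (Ne.symm huv)] at hz
      exact sgn_ne_zero γ (by linear_combination -hz)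
    · -- (v,u)
      right
      rw [wv_b (Ne.symm huv), wv_a] at hz
      have hd : d = γ := by apply sgn_inj; linear_combination hz
      rw [hd, edgeHyp_symm]
    · exact absurd rfl hpq

/-- S4: hyperplanes containing the intersection of two edges sharing the vertex `s`. -/
lemma S4 {G : SGraph l} {a s b : Fin l} (has : a ≠ s) (hab : a ≠ b) (hsb : s ≠ b)
    (ε δ : Bool) {L : Hyp l} (hL : L ∈ graphArr G)
    (hs : ∀ t, t ≠ a → t ≠ s → t ≠ b → ev t ∈ L)
    (hw : wv3 a s b (-sgn ε) (sgn ε * sgn δ) ∈ L) :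
    L = edgeHyp a s ε ∨ L = edgeHyp s b δ ∨ L = edgeHyp a b (xor ε δ) := by
  rcases mem_graphArr.1 hL with ⟨n, _, rfl⟩ | ⟨⟨p, q, d⟩, he, rfl⟩
  · exfalso
    rw [mem_loopHyp] at hw
    by_cases hna : n = a
    · rw [hna, wv3_a] at hw; exact one_ne_zero hw
    by_cases hns : n = s
    · rw [hns, wv3_s _ (Ne.symm has)] at hw; exact sgn_ne_zero ε (neg_eq_zero.1 hw)
    by_cases hnb : n = b
    · rw [hnb, wv3_b (Ne.symm hab) (Ne.symm hsb)] at hw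
      exact mul_ne_zero (sgn_ne_zero ε) (sgn_ne_zero δ) hw
    · have := hs n hna hns hnb
      rw [mem_loopHyp, ev_self] at this
      exact one_ne_zero this
  · simp only at *
    have hpq : p ≠ q := ne_of_lt (G.edges_lt _ he)
    have hp : p = a ∨ p = s ∨ p = b := by
      by_contra hc; push_neg at hc
      have := hs p hc.1 hc.2.1 hc.2.2
      rw [mem_edgeHyp, ev_self, ev_ne (Ne.symm hpq)] at this
      simp at this
    have hq : q = a ∨ q = s ∨ q = b := by
      by_contra hc; push_neg at hc
      have := hs q hc.1 hc.2.1 hc.2.2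
      rw [mem_edgeHyp, ev_self, ev_ne hpq] at this
      simp at this
      exact sgn_ne_zero d this
    rw [mem_edgeHyp] at hw
    rcases hp with hp | hp | hp <;> rcases hq with hq | hq | hq <;>
        rw [hp, hq] at hw hpq ⊢
    · exact absurd rfl hpq
    · -- (a,s)
      left
      rw [wv3_a, wv3_s _ (Ne.symm has)] at hw
      have hd : d = ε := by
        apply sgn_inj
        linear_combination (-sgn ε) * hw - sgn d * sgn_mul_self ε
      rw [hd]
    · -- (a,b) : third edge
      right; right
      rw [wv3_a, wv3_b (Ne.symm hab) (Ne.symm hsb)] at hw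
      have hd : d = xor ε δ := by
        apply sgn_inj
        rw [sgn_xor]
        linear_combination (sgn ε * sgn δ) * hw - (sgn d * sgn δ * sgn δ) * sgn_mul_self ε
          - sgn d * sgn_mul_self δ
      rw [hd]
    · -- (s,a)
      left
      rw [wv3_s _ (Ne.symm has), wv3_a] at hw
      have hd : d = ε := by apply sgn_inj; linear_combination hw
      rw [hd, edgeHyp_symm]
    · exact absurd rfl hpq
    · -- (s,b)
      right; left
      rw [wv3_s _ (Ne.symm has), wv3_b (Ne.symm hab) (Ne.symm hsb)] at hw
      have hd : d = δ := by
        apply sgn_inj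
        linear_combination (sgn δ * sgn ε) * hw
          - (sgn δ * (sgn d * sgn δ - 1)) * sgn_mul_self ε - sgn d * sgn_mul_self δ
      rw [hd]
    · -- (b,a)
      right; right
      rw [wv3_b (Ne.symm hab) (Ne.symm hsb), wv3_a] at hw
      have hd : d = xor ε δ := by
        apply sgn_inj
        rw [sgn_xor]
        linear_combination hw
      rw [hd, edgeHyp_symm]
    · -- (b,s)
      right; left
      rw [wv3_b (Ne.symm hab) (Ne.symm hsb), wv3_s _ (Ne.symm has)] at hw
      have hd : d = δ := by
        apply sgn_inj
        linear_combination (-sgn ε) * hw + (sgn δ - sgn d) * sgn_mul_self ε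
      rw [hd, edgeHyp_symm]
    · exact absurd rfl hpq

end Beta3
namespace Beta3

variable {l : ℕ}

lemma isRank2Flat_inf {A : Finset (Hyp l)} {H K : Hyp l} (hH : H ∈ A) (hK : K ∈ A)
    (hne : H ≠ K) : IsRank2Flat A (H ⊓ K) := ⟨H, hH, K, hK, hne, rfl⟩

lemma mem_flatHyps {A : Finset (Hyp l)} {X : Hyp l} {L : {H // H ∈ A}} :
    L ∈ flatHyps A X ↔ X ≤ (L : Hyp l) := by
  simp [flatHyps]

/-- m = 2 : the flat `H ⊓ K` is contained in no other hyperplane of `A`. -/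
lemma eta_eq_of_two {A : Finset (Hyp l)} {η : {H // H ∈ A} → ZMod 3}
    (hc : IsCocycle 3 A η) {H K : Hyp l} (hH : H ∈ A) (hK : K ∈ A) (hne : H ≠ K)
    (hsub : ∀ L ∈ A, H ⊓ K ≤ L → L = H ∨ L = K) :
    η ⟨H, hH⟩ = η ⟨K, hK⟩ := by
  have hflat : flatHyps A (H ⊓ K) = {⟨H, hH⟩, ⟨K, hK⟩} := by
    ext ⟨L, hL⟩
    rw [mem_flatHyps]
    simp only [Finset.mem_insert, Finset.mem_singleton, Subtype.mk.injEq]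
    constructor
    · exact fun h => hsub L hL h
    · rintro (rfl | rfl)
      · exact inf_le_left
      · exact inf_le_right
  have hcard : (flatHyps A (H ⊓ K)).card = 2 := by
    rw [hflat]
    rw [Finset.card_insert_of_notMem (by simp [hne]), Finset.card_singleton]
  have h2 := (hc _ (isRank2Flat_inf hH hK hne)).2 (by rw [hcard]; decide)
  exact h2 ⟨H, hH⟩ (by rw [mem_flatHyps]; exact inf_le_left)
    ⟨K, hK⟩ (by rw [mem_flatHyps]; exact inf_le_right)

/-- m = 3 : exactly one more hyperplane `N` contains `H ⊓ K`. -/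
lemma eta_sum_of_three {A : Finset (Hyp l)} {η : {H // H ∈ A} → ZMod 3}
    (hc : IsCocycle 3 A η) {H K N : Hyp l} (hH : H ∈ A) (hK : K ∈ A) (hN : N ∈ A)
    (hne : H ≠ K) (hne2 : H ≠ N) (hne3 : K ≠ N) (hNle : H ⊓ K ≤ N)
    (hsub : ∀ L ∈ A, H ⊓ K ≤ L → L = H ∨ L = K ∨ L = N) :
    η ⟨H, hH⟩ + η ⟨K, hK⟩ + η ⟨N, hN⟩ = 0 := by
  have hflat : flatHyps A (H ⊓ K) = {⟨H, hH⟩, ⟨K, hK⟩, ⟨N, hN⟩} := by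
    ext ⟨L, hL⟩
    rw [mem_flatHyps]
    simp only [Finset.mem_insert, Finset.mem_singleton, Subtype.mk.injEq]
    constructor
    · exact fun h => hsub L hL h
    · rintro (rfl | rfl | rfl)
      · exact inf_le_left
      · exact inf_le_right
      · exact hNle
  have hcard : (flatHyps A (H ⊓ K)).card = 3 := by
    rw [hflat]
    rw [Finset.card_insert_of_notMem (by simp [hne, hne2]),
      Finset.card_insert_of_notMem (by simp [hne3]), Finset.card_singleton]
  have h2 := (hc _ (isRank2Flat_inf hH hK hne)).1 (by rw [hcard])
  rw [hflat, Finset.sum_insert (by simp [hne, hne2]),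
    Finset.sum_insert (by simp [hne3]), Finset.sum_singleton] at h2
  linear_combination h2

/-- m = 4 : exactly two more hyperplanes contain `H ⊓ K`; values are constant. -/
lemma eta_eq_of_four {A : Finset (Hyp l)} {η : {H // H ∈ A} → ZMod 3}
    (hc : IsCocycle 3 A η) {H K N M : Hyp l} (hH : H ∈ A) (hK : K ∈ A) (hN : N ∈ A)
    (hM : M ∈ A)
    (hne : H ≠ K) (hne2 : H ≠ N) (hne3 : K ≠ N) (hne4 : H ≠ M) (hne5 : K ≠ M)
    (hne6 : N ≠ M) (hNle : H ⊓ K ≤ N) (hMle : H ⊓ K ≤ M)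
    (hsub : ∀ L ∈ A, H ⊓ K ≤ L → L = H ∨ L = K ∨ L = N ∨ L = M) :
    η ⟨H, hH⟩ = η ⟨K, hK⟩ ∧ η ⟨N, hN⟩ = η ⟨K, hK⟩ ∧ η ⟨M, hM⟩ = η ⟨K, hK⟩ := by
  have hflat : flatHyps A (H ⊓ K) = {⟨H, hH⟩, ⟨K, hK⟩, ⟨N, hN⟩, ⟨M, hM⟩} := by
    ext ⟨L, hL⟩
    rw [mem_flatHyps]
    simp only [Finset.mem_insert, Finset.mem_singleton, Subtype.mk.injEq]
    constructor
    · exact fun h => hsub L hL h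
    · rintro (rfl | rfl | rfl | rfl)
      · exact inf_le_left
      · exact inf_le_right
      · exact hNle
      · exact hMle
  have hcard : (flatHyps A (H ⊓ K)).card = 4 := by
    rw [hflat]
    rw [Finset.card_insert_of_notMem (by simp [hne, hne2, hne4]),
      Finset.card_insert_of_notMem (by simp [hne3, hne5]),
      Finset.card_insert_of_notMem (by simp [hne6]), Finset.card_singleton]
  have h2 := (hc _ (isRank2Flat_inf hH hK hne)).2 (by rw [hcard]; decide)
  refine ⟨h2 _ (mem_flatHyps.2 inf_le_left) _ (mem_flatHyps.2 inf_le_right),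
    h2 _ (mem_flatHyps.2 hNle) _ (mem_flatHyps.2 inf_le_right),
    h2 _ (mem_flatHyps.2 hMle) _ (mem_flatHyps.2 inf_le_right)⟩

end Beta3
namespace Beta3

variable {l : ℕ}

lemma ev_mem_loopHyp {m t : Fin l} (h : m ≠ t) : ev t ∈ loopHyp m :=
  mem_loopHyp.2 (ev_ne h)

lemma ev_mem_edgeHyp {u v t : Fin l} (h1 : u ≠ t) (h2 : v ≠ t) (γ : Bool) :
    ev t ∈ edgeHyp u v γ := by
  rw [mem_edgeHyp, ev_ne h1, ev_ne h2]; ring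

lemma wv_mem_loopHyp {u v m : Fin l} (h1 : m ≠ u) (h2 : m ≠ v) (c : ℂ) :
    wv u v c ∈ loopHyp m := by
  rw [mem_loopHyp, wv_o h1 h2]

lemma wv_mem_edgeHyp_disjoint {i j u v : Fin l} (h1 : u ≠ i) (h2 : u ≠ j)
    (h3 : v ≠ i) (h4 : v ≠ j) (γ : Bool) (c : ℂ) : wv i j c ∈ edgeHyp u v γ := by
  rw [mem_edgeHyp, wv_o h1 h2, wv_o h3 h4]; ring

lemma wv3_mem_1 {a s : Fin l} (b : Fin l) (has : a ≠ s) (ε δ : Bool) :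
    wv3 a s b (-sgn ε) (sgn ε * sgn δ) ∈ edgeHyp a s ε := by
  rw [mem_edgeHyp, wv3_a, wv3_s _ (Ne.symm has)]
  linear_combination -sgn_mul_self ε

lemma wv3_mem_2 {a s b : Fin l} (has : a ≠ s) (hab : a ≠ b) (hsb : s ≠ b) (ε δ : Bool) :
    wv3 a s b (-sgn ε) (sgn ε * sgn δ) ∈ edgeHyp s b δ := by
  rw [mem_edgeHyp, wv3_s _ (Ne.symm has), wv3_b (Ne.symm hab) (Ne.symm hsb)]
  linear_combination sgn ε * sgn_mul_self δ

lemma le_third {a s b : Fin l} (ε δ : Bool) :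
    edgeHyp a s ε ⊓ edgeHyp s b δ ≤ edgeHyp a b (xor ε δ) := by
  intro x hx
  obtain ⟨h1, h2⟩ := Submodule.mem_inf.1 hx
  rw [mem_edgeHyp] at h1 h2 ⊢
  rw [sgn_xor]
  linear_combination h1 - sgn ε * h2

lemma sgn_sub_ne_zero {b1 b2 : Bool} (h : b1 ≠ b2) : sgn b1 - sgn b2 ≠ 0 := by
  cases b1 <;> cases b2 <;> first | exact absurd rfl h | norm_num [sgn]

lemma pair_inf_edges {i j : Fin l} {b1 b2 : Bool} (hb : b1 ≠ b2) {x : Fin l → ℂ}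
    (h1 : x ∈ edgeHyp i j b1) (h2 : x ∈ edgeHyp i j b2) : x i = 0 ∧ x j = 0 := by
  rw [mem_edgeHyp] at h1 h2
  have hj : x j = 0 := by
    have hs : (sgn b1 - sgn b2) * x j = 0 := by linear_combination h1 - h2
    rcases mul_eq_zero.1 hs with h | h
    · exact absurd h (sgn_sub_ne_zero hb)
    · exact h
  exact ⟨by linear_combination h1 - sgn b1 * hj, hj⟩

lemma pair_inf_loop_edge {i j : Fin l} {c : Bool} {x : Fin l → ℂ}
    (h1 : x ∈ loopHyp i) (h2 : x ∈ edgeHyp i j c) : x i = 0 ∧ x j = 0 := by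
  rw [mem_loopHyp] at h1
  rw [mem_edgeHyp] at h2
  have hj : x j = 0 := by
    have hs : sgn c * x j = 0 := by linear_combination h2 - h1
    rcases mul_eq_zero.1 hs with h | h
    · exact absurd h (sgn_ne_zero c)
    · exact h
  exact ⟨h1, hj⟩

lemma pair_inf_loop_edge' {i j : Fin l} {c : Bool} {x : Fin l → ℂ}
    (h1 : x ∈ loopHyp j) (h2 : x ∈ edgeHyp i j c) : x i = 0 ∧ x j = 0 := by
  rw [mem_loopHyp] at h1
  rw [mem_edgeHyp] at h2
  exact ⟨by linear_combination h2 - sgn c * h1, h1⟩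

lemma mem_loopHyp_of_zero {i : Fin l} {x : Fin l → ℂ} (h : x i = 0) : x ∈ loopHyp i :=
  mem_loopHyp.2 h

lemma mem_edgeHyp_of_zero {i j : Fin l} {b : Bool} {x : Fin l → ℂ}
    (h1 : x i = 0) (h2 : x j = 0) : x ∈ edgeHyp i j b := by
  rw [mem_edgeHyp, h1, h2]; ring

lemma edge_sign_ne {i j : Fin l} (hij : i ≠ j) {b1 b2 : Bool} (hb : b1 ≠ b2) :
    edgeHyp i j b1 ≠ edgeHyp i j b2 :=
  fun h => hb (edgeHyp_sign_inj hij h)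

/-- loop m vs edge u v (m outside): the flat has m = 2, values equal. -/
lemma W_loop_edge {G : SGraph l} {η : {H // H ∈ graphArr G} → ZMod 3}
    (hc : IsCocycle 3 (graphArr G) η) {m u v : Fin l} {γ : Bool}
    (hmu : m ≠ u) (hmv : m ≠ v) (huv : u ≠ v)
    (hm : loopHyp m ∈ graphArr G) (he : edgeHyp u v γ ∈ graphArr G) :
    η ⟨loopHyp m, hm⟩ = η ⟨edgeHyp u v γ, he⟩ := by
  apply eta_eq_of_two hc hm he (loopHyp_ne_edgeHyp huv γ)
  intro L hL hle
  apply S2 hmu hmv huv γ hL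
  · intro t htm htu htv
    exact hle (Submodule.mem_inf.2
      ⟨ev_mem_loopHyp (Ne.symm htm), ev_mem_edgeHyp (Ne.symm htu) (Ne.symm htv) γ⟩)
  · exact hle (Submodule.mem_inf.2 ⟨wv_mem_loopHyp hmu hmv _, wv_mem_edgeHyp huv γ⟩)

/-- two disjoint edges: the flat has m = 2, values equal. -/
lemma W_disjoint {G : SGraph l} {η : {H // H ∈ graphArr G} → ZMod 3}
    (hc : IsCocycle 3 (graphArr G) η) {i j u v : Fin l} {ε γ : Bool}
    (hij : i ≠ j) (huv : u ≠ v) (hiu : i ≠ u) (hiv : i ≠ v) (hju : j ≠ u) (hjv : j ≠ v)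
    (h1 : edgeHyp i j ε ∈ graphArr G) (h2 : edgeHyp u v γ ∈ graphArr G) :
    η ⟨edgeHyp i j ε, h1⟩ = η ⟨edgeHyp u v γ, h2⟩ := by
  apply eta_eq_of_two hc h1 h2
    (edgeHyp_ne_of_pairs hij ε γ (fun h => by
      rcases h with ⟨ha, hb⟩ | ⟨ha, hb⟩
      exacts [hiu ha, hiv ha]))
  intro L hL hle
  apply S3 hij huv hiu hiv hju hjv ε γ hL
  · intro t hti htj htu htv
    exact hle (Submodule.mem_inf.2
      ⟨ev_mem_edgeHyp (Ne.symm hti) (Ne.symm htj) ε,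
       ev_mem_edgeHyp (Ne.symm htu) (Ne.symm htv) γ⟩)
  · exact hle (Submodule.mem_inf.2
      ⟨wv_mem_edgeHyp hij ε,
       wv_mem_edgeHyp_disjoint (Ne.symm hiu) (Ne.symm hju) (Ne.symm hiv) (Ne.symm hjv) γ _⟩)
  · exact hle (Submodule.mem_inf.2
      ⟨wv_mem_edgeHyp_disjoint hiu hiv hju hjv ε _, wv_mem_edgeHyp huv γ⟩)

/-- two edges sharing the vertex `s`: sum rule / equality rule. -/
lemma W_shared {G : SGraph l} {η : {H // H ∈ graphArr G} → ZMod 3}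
    (hc : IsCocycle 3 (graphArr G) η) {a s b : Fin l} {ε δ : Bool}
    (has : a ≠ s) (hab : a ≠ b) (hsb : s ≠ b)
    (h1 : edgeHyp a s ε ∈ graphArr G) (h2 : edgeHyp s b δ ∈ graphArr G) :
    (∀ hN : edgeHyp a b (xor ε δ) ∈ graphArr G,
      η ⟨edgeHyp a s ε, h1⟩ + η ⟨edgeHyp s b δ, h2⟩ + η ⟨edgeHyp a b (xor ε δ), hN⟩ = 0) ∧
    (edgeHyp a b (xor ε δ) ∉ graphArr G →
      η ⟨edgeHyp a s ε, h1⟩ = η ⟨edgeHyp s b δ, h2⟩) := by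
  have hne : edgeHyp a s ε ≠ edgeHyp s b δ :=
    edgeHyp_ne_of_pairs has ε δ (fun h => by
      rcases h with ⟨ha, hb⟩ | ⟨ha, hb⟩
      exacts [has ha, hab ha])
  have hne2 : edgeHyp a s ε ≠ edgeHyp a b (xor ε δ) :=
    edgeHyp_ne_of_pairs has ε (xor ε δ) (fun h => by
      rcases h with ⟨ha, hb⟩ | ⟨ha, hb⟩
      exacts [hsb hb, hab ha])
  have hne3 : edgeHyp s b δ ≠ edgeHyp a b (xor ε δ) :=
    edgeHyp_ne_of_pairs hsb δ (xor ε δ) (fun h => by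
      rcases h with ⟨ha, hb⟩ | ⟨ha, hb⟩
      exacts [has ha.symm, hsb ha])
  have hsub0 : ∀ L ∈ graphArr G, edgeHyp a s ε ⊓ edgeHyp s b δ ≤ L →
      L = edgeHyp a s ε ∨ L = edgeHyp s b δ ∨ L = edgeHyp a b (xor ε δ) := by
    intro L hL hle
    apply S4 has hab hsb ε δ hL
    · intro t hta hts htb
      exact hle (Submodule.mem_inf.2
        ⟨ev_mem_edgeHyp (Ne.symm hta) (Ne.symm hts) ε,
         ev_mem_edgeHyp (Ne.symm hts) (Ne.symm htb) δ⟩)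
    · exact hle (Submodule.mem_inf.2 ⟨wv3_mem_1 b has ε δ, wv3_mem_2 has hab hsb ε δ⟩)
  constructor
  · intro hN
    exact eta_sum_of_three hc h1 h2 hN hne hne2 hne3 (le_third ε δ) hsub0
  · intro hN
    apply eta_eq_of_two hc h1 h2 hne
    intro L hL hle
    rcases hsub0 L hL hle with h | h | h
    · exact Or.inl h
    · exact Or.inr h
    · exact absurd (h ▸ hL) hN

end Beta3
namespace Beta3

variable {l : ℕ}

lemma subty_eq {A : Finset (Hyp l)} {X Y : Hyp l} (hX : X ∈ A) (hY : Y ∈ A) (h : X = Y) :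
    (⟨X, hX⟩ : {H // H ∈ A}) = ⟨Y, hY⟩ := Subtype.ext h

lemma bool_cover {b1 b2 : Bool} (hb : b1 ≠ b2) (c : Bool) : c = b1 ∨ c = b2 := by
  cases c <;> cases b1 <;> cases b2 <;> simp_all

/-- the pair flat `x_i = x_j = 0` spanned by a double edge: given vanishing loops and
vanishing at one signed edge, the other signed edge vanishes too. -/
lemma W_pairflat {G : SGraph l} {η : {H // H ∈ graphArr G} → ZMod 3}
    (hc : IsCocycle 3 (graphArr G) η) {i j : Fin l} (hij : i ≠ j) {b1 b2 : Bool}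
    (hb : b1 ≠ b2) (h1 : edgeHyp i j b1 ∈ graphArr G) (h2 : edgeHyp i j b2 ∈ graphArr G)
    (hli : ∀ h : loopHyp i ∈ graphArr G, η ⟨loopHyp i, h⟩ = 0)
    (hlj : ∀ h : loopHyp j ∈ graphArr G, η ⟨loopHyp j, h⟩ = 0)
    (hz1 : η ⟨edgeHyp i j b1, h1⟩ = 0) : η ⟨edgeHyp i j b2, h2⟩ = 0 := by
  set H := edgeHyp i j b1 with hHdef
  set K := edgeHyp i j b2 with hKdef
  have hne : H ≠ K := edge_sign_ne hij hb
  have hinf : ∀ x ∈ H ⊓ K, x i = 0 ∧ x j = 0 := by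
    intro x hx
    obtain ⟨hx1, hx2⟩ := Submodule.mem_inf.1 hx
    exact pair_inf_edges hb hx1 hx2
  have hle_li : H ⊓ K ≤ loopHyp i := fun x hx => mem_loopHyp_of_zero (hinf x hx).1
  have hle_lj : H ⊓ K ≤ loopHyp j := fun x hx => mem_loopHyp_of_zero (hinf x hx).2
  have hsub4 : ∀ L ∈ graphArr G, H ⊓ K ≤ L →
      L = loopHyp i ∨ L = loopHyp j ∨ L = H ∨ L = K := by
    intro L hL hle
    have := S1 hij hL (fun t hti htj => hle (Submodule.mem_inf.2
      ⟨ev_mem_edgeHyp (Ne.symm hti) (Ne.symm htj) b1,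
       ev_mem_edgeHyp (Ne.symm hti) (Ne.symm htj) b2⟩))
    rcases this with h | h | h | h
    · exact Or.inl h
    · exact Or.inr (Or.inl h)
    · rcases bool_cover hb true with hc' | hc'
      · exact Or.inr (Or.inr (Or.inl (by rw [h, hc'])))
      · exact Or.inr (Or.inr (Or.inr (by rw [h, hc'])))
    · rcases bool_cover hb false with hc' | hc'
      · exact Or.inr (Or.inr (Or.inl (by rw [h, hc'])))
      · exact Or.inr (Or.inr (Or.inr (by rw [h, hc'])))
  have hHli : H ≠ loopHyp i := (loopHyp_ne_edgeHyp hij b1).symm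
  have hKli : K ≠ loopHyp i := (loopHyp_ne_edgeHyp hij b2).symm
  have hHlj : H ≠ loopHyp j := (loopHyp_ne_edgeHyp hij b1).symm
  have hKlj : K ≠ loopHyp j := (loopHyp_ne_edgeHyp hij b2).symm
  have hlij : loopHyp i ≠ loopHyp j := fun h => hij (loopHyp_injective h)
  by_cases li : loopHyp i ∈ graphArr G <;> by_cases lj : loopHyp j ∈ graphArr G
  · -- all four present
    have h4 := eta_eq_of_four hc h1 h2 li lj hne hHli hKli hHlj hKlj hlij hle_li hle_lj
      (by
        intro L hL hle
        rcases hsub4 L hL hle with h | h | h | h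
        · exact Or.inr (Or.inr (Or.inl h))
        · exact Or.inr (Or.inr (Or.inr h))
        · exact Or.inl h
        · exact Or.inr (Or.inl h))
    rw [← h4.1]
    exact hz1
  · -- loop i only
    have h3 := eta_sum_of_three hc h1 h2 li hne hHli hKli hle_li
      (by
        intro L hL hle
        rcases hsub4 L hL hle with h | h | h | h
        · exact Or.inr (Or.inr h)
        · exact absurd (h ▸ hL) lj
        · exact Or.inl h
        · exact Or.inr (Or.inl h))
    rw [hz1, hli li] at h3
    linear_combination h3
  · -- loop j only
    have h3 := eta_sum_of_three hc h1 h2 lj hne hHlj hKlj hle_lj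
      (by
        intro L hL hle
        rcases hsub4 L hL hle with h | h | h | h
        · exact absurd (h ▸ hL) li
        · exact Or.inr (Or.inr h)
        · exact Or.inl h
        · exact Or.inr (Or.inl h))
    rw [hz1, hlj lj] at h3
    linear_combination h3
  · -- no loops
    have h2' := eta_eq_of_two hc h1 h2 hne
      (by
        intro L hL hle
        rcases hsub4 L hL hle with h | h | h | h
        · exact absurd (h ▸ hL) li
        · exact absurd (h ▸ hL) lj
        · exact Or.inl h
        · exact Or.inr h)
    rw [← h2']
    exact hz1

/-- VANISHING, triangle type: a cocycle vanishing on a triangle of edges vanishes. -/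
lemma vanish_tri {G : SGraph l} {η : {H // H ∈ graphArr G} → ZMod 3}
    (hc : IsCocycle 3 (graphArr G) η) {i j k : Fin l} {ε δ σ : Bool}
    (hij : i ≠ j) (hik : i ≠ k) (hjk : j ≠ k)
    (h1 : edgeHyp i j ε ∈ graphArr G) (h2 : edgeHyp j k δ ∈ graphArr G)
    (h3 : edgeHyp i k σ ∈ graphArr G)
    (z1 : η ⟨edgeHyp i j ε, h1⟩ = 0) (z2 : η ⟨edgeHyp j k δ, h2⟩ = 0)
    (z3 : η ⟨edgeHyp i k σ, h3⟩ = 0) :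
    ∀ (Lv : Hyp l) (hL : Lv ∈ graphArr G), η ⟨Lv, hL⟩ = 0 := by
  -- step 1 : all loops vanish
  have hloop : ∀ (m : Fin l) (hm : loopHyp m ∈ graphArr G), η ⟨loopHyp m, hm⟩ = 0 := by
    intro m hm
    by_cases hmi : m = i
    · rw [W_loop_edge hc (hmi ▸ hij) (hmi ▸ hik) hjk hm h2]
      exact z2
    by_cases hmj : m = j
    · rw [W_loop_edge hc (hmj ▸ Ne.symm hij) (hmj ▸ hjk) hik hm h3]
      exact z3
    by_cases hmk : m = k
    · rw [W_loop_edge hc (hmk ▸ Ne.symm hik) (hmk ▸ Ne.symm hjk) hij hm h1]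
      exact z1
    · rw [W_loop_edge hc hmi hmj hij hm h1]
      exact z1
  -- step 2 : edges with a given pair vanish, using the matching triangle edge
  have hpair_ij : ∀ (d : Bool) (hd : edgeHyp i j d ∈ graphArr G), η ⟨edgeHyp i j d, hd⟩ = 0 := by
    intro d hd
    by_cases hde : d = ε
    · rw [subty_eq hd h1 (by rw [hde])]
      exact z1
    · exact W_pairflat hc hij (Ne.symm hde) h1 hd (hloop i) (hloop j) z1
  have hpair_jk : ∀ (d : Bool) (hd : edgeHyp j k d ∈ graphArr G),
      η ⟨edgeHyp j k d, hd⟩ = 0 := by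
    intro d hd
    by_cases hde : d = δ
    · rw [subty_eq hd h2 (by rw [hde])]
      exact z2
    · exact W_pairflat hc hjk (Ne.symm hde) h2 hd (hloop j) (hloop k) z2
  have hpair_ik : ∀ (d : Bool) (hd : edgeHyp i k d ∈ graphArr G),
      η ⟨edgeHyp i k d, hd⟩ = 0 := by
    intro d hd
    by_cases hde : d = σ
    · rw [subty_eq hd h3 (by rw [hde])]
      exact z3
    · exact W_pairflat hc hik (Ne.symm hde) h3 hd (hloop i) (hloop k) z3
  -- step 3 : everything vanishes
  intro Lv hL
  rcases mem_graphArr.1 hL with ⟨m, _, hLv⟩ | ⟨⟨p, q, d⟩, hpe, hLv⟩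
  · rw [subty_eq hL (hLv ▸ hL) hLv]
    exact hloop m _
  · simp only at hLv
    have hpq : p ≠ q := ne_of_lt (G.edges_lt _ hpe)
    have hL' : edgeHyp p q d ∈ graphArr G := hLv ▸ hL
    rw [subty_eq hL hL' hLv]
    clear hLv hL
    by_cases hpi : p = i
    · by_cases hqj : q = j
      · have heq : edgeHyp p q d = edgeHyp i j d := by rw [hpi, hqj]
        rw [subty_eq hL' (heq ▸ hL') heq]
        exact hpair_ij d _
      by_cases hqk : q = k
      · have heq : edgeHyp p q d = edgeHyp i k d := by rw [hpi, hqk]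
        rw [subty_eq hL' (heq ▸ hL') heq]
        exact hpair_ik d _
      · -- p = i, q ∉ {j,k} (also q ≠ i) : disjoint from edge (j,k)
        rw [W_disjoint hc hpq hjk (hpi ▸ hij) (hpi ▸ hik) hqj hqk hL' h2]
        exact z2
    by_cases hpj : p = j
    · by_cases hqi : q = i
      · have heq : edgeHyp p q d = edgeHyp i j d := by
          rw [hpj, hqi, edgeHyp_symm]
        rw [subty_eq hL' (heq ▸ hL') heq]
        exact hpair_ij d _
      by_cases hqk : q = k
      · have heq : edgeHyp p q d = edgeHyp j k d := by rw [hpj, hqk]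
        rw [subty_eq hL' (heq ▸ hL') heq]
        exact hpair_jk d _
      · -- p = j, q ∉ {i,k} : disjoint from edge (i,k)
        rw [W_disjoint hc hpq hik (hpj ▸ Ne.symm hij) (hpj ▸ hjk) hqi hqk hL' h3]
        exact z3
    by_cases hpk : p = k
    · by_cases hqi : q = i
      · have heq : edgeHyp p q d = edgeHyp i k d := by
          rw [hpk, hqi, edgeHyp_symm]
        rw [subty_eq hL' (heq ▸ hL') heq]
        exact hpair_ik d _
      by_cases hqj : q = j
      · have heq : edgeHyp p q d = edgeHyp j k d := by
          rw [hpk, hqj, edgeHyp_symm]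
        rw [subty_eq hL' (heq ▸ hL') heq]
        exact hpair_jk d _
      · -- p = k, q ∉ {i,j} : disjoint from edge (i,j)
        rw [W_disjoint hc hpq hij (hpk ▸ Ne.symm hik) (hpk ▸ Ne.symm hjk) hqi hqj hL' h1]
        exact z1
    · -- p ∉ {i,j,k}
      by_cases hqi : q = i
      · rw [W_disjoint hc hpq hjk hpj hpk (hqi ▸ hij) (hqi ▸ hik) hL' h2]
        exact z2
      by_cases hqj : q = j
      · rw [W_disjoint hc hpq hik hpi hpk (hqj ▸ Ne.symm hij) (hqj ▸ hjk) hL' h3]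
        exact z3
      by_cases hqk : q = k
      · rw [W_disjoint hc hpq hij hpi hpj (hqk ▸ Ne.symm hik) (hqk ▸ Ne.symm hjk) hL' h1]
        exact z1
      · rw [W_disjoint hc hpq hij hpi hpj hqi hqj hL' h1]
        exact z1

/-- VANISHING, pair type 1 : two loops and one edge. -/
lemma vanish_pair1 {G : SGraph l} {η : {H // H ∈ graphArr G} → ZMod 3}
    (hc : IsCocycle 3 (graphArr G) η) {i j : Fin l} {ε : Bool} (hij : i ≠ j)
    (hli : loopHyp i ∈ graphArr G) (hlj : loopHyp j ∈ graphArr G)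
    (he : edgeHyp i j ε ∈ graphArr G) (habs : edgeHyp i j (!ε) ∉ graphArr G)
    (z1 : η ⟨loopHyp i, hli⟩ = 0) (z2 : η ⟨loopHyp j, hlj⟩ = 0)
    (z3 : η ⟨edgeHyp i j ε, he⟩ = 0) :
    ∀ (Lv : Hyp l) (hL : Lv ∈ graphArr G), η ⟨Lv, hL⟩ = 0 := by
  intro Lv hL
  rcases mem_graphArr.1 hL with ⟨m, _, hLv⟩ | ⟨⟨p, q, d⟩, hpe, hLv⟩
  · have hL' : loopHyp m ∈ graphArr G := hLv ▸ hL
    rw [subty_eq hL hL' hLv]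
    by_cases hmi : m = i
    · rw [subty_eq hL' (hmi ▸ hL') (by rw [hmi])]
      exact z1
    by_cases hmj : m = j
    · rw [subty_eq hL' (hmj ▸ hL') (by rw [hmj])]
      exact z2
    · rw [W_loop_edge hc hmi hmj hij hL' he]
      exact z3
  · simp only at hLv
    have hpq : p ≠ q := ne_of_lt (G.edges_lt _ hpe)
    have hL' : edgeHyp p q d ∈ graphArr G := hLv ▸ hL
    rw [subty_eq hL hL' hLv]
    by_cases hpi : p = i
    · by_cases hqj : q = j
      · -- pair {i,j}
        have heq : edgeHyp p q d = edgeHyp i j d := by rw [hpi, hqj]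
        by_cases hde : d = ε
        · rw [subty_eq hL' he (by rw [heq, hde])]
          exact z3
        · have heq2 : edgeHyp p q d = edgeHyp i j (!ε) := by
            rw [heq]
            congr 1
            cases d <;> cases ε <;> simp_all
          exact absurd (heq2 ▸ hL') habs
      · -- touches i, not j : use loop j
        rw [← W_loop_edge hc (show j ≠ p by rw [hpi]; exact Ne.symm hij) (Ne.symm hqj)
          hpq hlj hL']
        exact z2
    · by_cases hqi : q = i
      · by_cases hpj : p = j
        · -- pair {j,i}
          have heq : edgeHyp p q d = edgeHyp i j d := by rw [hpj, hqi, edgeHyp_symm]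
          by_cases hde : d = ε
          · rw [subty_eq hL' he (by rw [heq, hde])]
            exact z3
          · have heq2 : edgeHyp p q d = edgeHyp i j (!ε) := by
              rw [heq]
              congr 1
              cases d <;> cases ε <;> simp_all
            exact absurd (heq2 ▸ hL') habs
        · -- touches i (as q), not j : use loop j
          rw [← W_loop_edge hc (Ne.symm hpj) (show j ≠ q by rw [hqi]; exact Ne.symm hij)
            hpq hlj hL']
          exact z2
      · -- i ∉ {p,q} : use loop i
        rw [← W_loop_edge hc (Ne.symm hpi) (Ne.symm hqi) hpq hli hL']
        exact z1

/-- VANISHING, pair type 2 : one loop (at `i`) and a double edge on `{i,j}`. -/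
lemma vanish_pair2 {G : SGraph l} {η : {H // H ∈ graphArr G} → ZMod 3}
    (hc : IsCocycle 3 (graphArr G) η) {i j : Fin l} (hij : i ≠ j)
    (hli : loopHyp i ∈ graphArr G) (hlj : loopHyp j ∉ graphArr G)
    (he1 : edgeHyp i j true ∈ graphArr G) (he2 : edgeHyp i j false ∈ graphArr G)
    (z1 : η ⟨loopHyp i, hli⟩ = 0) (z2 : η ⟨edgeHyp i j true, he1⟩ = 0)
    (z3 : η ⟨edgeHyp i j false, he2⟩ = 0) :
    ∀ (Lv : Hyp l) (hL : Lv ∈ graphArr G), η ⟨Lv, hL⟩ = 0 := by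
  -- first : edges not containing i vanish (also loops other than i)
  have hni : ∀ (p q : Fin l) (d : Bool), p ≠ q → i ≠ p → i ≠ q →
      ∀ hL : edgeHyp p q d ∈ graphArr G, η ⟨edgeHyp p q d, hL⟩ = 0 := by
    intro p q d hpq hip hiq hL
    rw [← W_loop_edge hc hip hiq hpq hli hL]
    exact z1
  -- edges containing i with other endpoint ≠ j
  have hyi : ∀ (u : Fin l) (d : Bool), u ≠ i → u ≠ j →
      ∀ hL : edgeHyp u i d ∈ graphArr G, η ⟨edgeHyp u i d, hL⟩ = 0 := by
    intro u d hui huj hL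
    -- shared vertex i with edge (i,j,true) : a = u, s = i, b = j
    have hW := W_shared hc hui huj hij hL he1
    by_cases hT : edgeHyp u j (xor d true) ∈ graphArr G
    · have hsum := hW.1 hT
      have hthird : η ⟨edgeHyp u j (xor d true), hT⟩ = 0 := hni u j _ huj (Ne.symm hui) hij hT
      rw [z2, hthird] at hsum
      linear_combination hsum
    · rw [hW.2 hT]
      exact z2
  intro Lv hL
  rcases mem_graphArr.1 hL with ⟨m, _, hLv⟩ | ⟨⟨p, q, d⟩, hpe, hLv⟩
  · have hL' : loopHyp m ∈ graphArr G := hLv ▸ hL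
    rw [subty_eq hL hL' hLv]
    by_cases hmi : m = i
    · rw [subty_eq hL' (hmi ▸ hL') (by rw [hmi])]
      exact z1
    by_cases hmj : m = j
    · exact absurd ((show loopHyp m = loopHyp j by rw [hmj]) ▸ hL') hlj
    · rw [W_loop_edge hc hmi hmj hij hL' he1]
      exact z2
  · simp only at hLv
    have hpq : p ≠ q := ne_of_lt (G.edges_lt _ hpe)
    have hL' : edgeHyp p q d ∈ graphArr G := hLv ▸ hL
    rw [subty_eq hL hL' hLv]
    by_cases hpi : p = i
    · by_cases hqj : q = j
      · -- pair {i,j}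
        have heq : edgeHyp p q d = edgeHyp i j d := by rw [hpi, hqj]
        cases d
        · rw [subty_eq hL' he2 heq]
          exact z3
        · rw [subty_eq hL' he1 heq]
          exact z2
      · -- edge (i, q) with q ∉ {i,j} : reorder to (q, i)
        have heq : edgeHyp p q d = edgeHyp q i d := by rw [hpi, edgeHyp_symm]
        rw [subty_eq hL' (heq ▸ hL') heq]
        exact hyi q d (show q ≠ i by rw [← hpi]; exact Ne.symm hpq) hqj _
    · by_cases hqi : q = i
      · by_cases hpj : p = j
        · -- pair {j,i}
          have heq : edgeHyp p q d = edgeHyp i j d := by rw [hpj, hqi, edgeHyp_symm]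
          cases d
          · rw [subty_eq hL' he2 heq]
            exact z3
          · rw [subty_eq hL' he1 heq]
            exact z2
        · have heq : edgeHyp p q d = edgeHyp p i d := by rw [hqi]
          rw [subty_eq hL' (heq ▸ hL') heq]
          exact hyi p d (show p ≠ i by rw [← hqi]; exact hpq) hpj _
      · exact hni p q d hpq (Ne.symm hpi) (Ne.symm hqi) hL'

end Beta3
namespace Beta3

variable {l : ℕ}

lemma flatHyps_eq_one {A : Finset (Hyp l)} {X W1 : Hyp l} (h1 : W1 ∈ A) (hle1 : X ≤ W1)
    (hsub : ∀ L ∈ A, X ≤ L → L = W1) : flatHyps A X = {⟨W1, h1⟩} := by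
  ext ⟨L, hL⟩
  rw [mem_flatHyps]
  simp only [Finset.mem_singleton, Subtype.mk.injEq]
  exact ⟨fun h => hsub L hL h, fun h => h ▸ hle1⟩

lemma flatHyps_eq_two {A : Finset (Hyp l)} {X W1 W2 : Hyp l} (h1 : W1 ∈ A) (h2 : W2 ∈ A)
    (hle1 : X ≤ W1) (hle2 : X ≤ W2)
    (hsub : ∀ L ∈ A, X ≤ L → L = W1 ∨ L = W2) :
    flatHyps A X = {⟨W1, h1⟩, ⟨W2, h2⟩} := by
  ext ⟨L, hL⟩
  rw [mem_flatHyps]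
  simp only [Finset.mem_insert, Finset.mem_singleton, Subtype.mk.injEq]
  constructor
  · exact fun h => hsub L hL h
  · rintro (rfl | rfl)
    exacts [hle1, hle2]

lemma flatHyps_eq_three {A : Finset (Hyp l)} {X W1 W2 W3 : Hyp l} (h1 : W1 ∈ A)
    (h2 : W2 ∈ A) (h3 : W3 ∈ A) (hle1 : X ≤ W1) (hle2 : X ≤ W2) (hle3 : X ≤ W3)
    (hsub : ∀ L ∈ A, X ≤ L → L = W1 ∨ L = W2 ∨ L = W3) :
    flatHyps A X = {⟨W1, h1⟩, ⟨W2, h2⟩, ⟨W3, h3⟩} := by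
  ext ⟨L, hL⟩
  rw [mem_flatHyps]
  simp only [Finset.mem_insert, Finset.mem_singleton, Subtype.mk.injEq]
  constructor
  · exact fun h => hsub L hL h
  · rintro (rfl | rfl | rfl)
    exacts [hle1, hle2, hle3]

lemma flatHyps_eq_four {A : Finset (Hyp l)} {X W1 W2 W3 W4 : Hyp l} (h1 : W1 ∈ A)
    (h2 : W2 ∈ A) (h3 : W3 ∈ A) (h4 : W4 ∈ A) (hle1 : X ≤ W1) (hle2 : X ≤ W2)
    (hle3 : X ≤ W3) (hle4 : X ≤ W4)
    (hsub : ∀ L ∈ A, X ≤ L → L = W1 ∨ L = W2 ∨ L = W3 ∨ L = W4) :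
    flatHyps A X = {⟨W1, h1⟩, ⟨W2, h2⟩, ⟨W3, h3⟩, ⟨W4, h4⟩} := by
  ext ⟨L, hL⟩
  rw [mem_flatHyps]
  simp only [Finset.mem_insert, Finset.mem_singleton, Subtype.mk.injEq]
  constructor
  · exact fun h => hsub L hL h
  · rintro (rfl | rfl | rfl | rfl)
    exacts [hle1, hle2, hle3, hle4]

/-- constancy contradiction machinery : value equality when m = 2. -/
lemma eta_const_two {A : Finset (Hyp l)} {η : {H // H ∈ A} → ZMod 3}
    (hc : IsCocycle 3 A η) {H K W1 W2 : Hyp l} (hH : H ∈ A) (hK : K ∈ A) (hne : H ≠ K)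
    (h1 : W1 ∈ A) (h2 : W2 ∈ A) (hd : W1 ≠ W2) (hle1 : H ⊓ K ≤ W1) (hle2 : H ⊓ K ≤ W2)
    (hsub : ∀ L ∈ A, H ⊓ K ≤ L → L = W1 ∨ L = W2) :
    η ⟨H, hH⟩ = η ⟨K, hK⟩ := by
  have hflat := flatHyps_eq_two h1 h2 hle1 hle2 hsub
  have hcard : (flatHyps A (H ⊓ K)).card = 2 := by
    rw [hflat, Finset.card_insert_of_notMem (by simp [hd]), Finset.card_singleton]
  exact (hc _ (isRank2Flat_inf hH hK hne)).2 (by rw [hcard]; decide)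
    _ (mem_flatHyps.2 inf_le_left) _ (mem_flatHyps.2 inf_le_right)

/-- value equality when m = 4. -/
lemma eta_const_four {A : Finset (Hyp l)} {η : {H // H ∈ A} → ZMod 3}
    (hc : IsCocycle 3 A η) {H K W1 W2 W3 W4 : Hyp l} (hH : H ∈ A) (hK : K ∈ A)
    (hne : H ≠ K) (h1 : W1 ∈ A) (h2 : W2 ∈ A) (h3 : W3 ∈ A) (h4 : W4 ∈ A)
    (hd12 : W1 ≠ W2) (hd13 : W1 ≠ W3) (hd14 : W1 ≠ W4) (hd23 : W2 ≠ W3)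
    (hd24 : W2 ≠ W4) (hd34 : W3 ≠ W4)
    (hle1 : H ⊓ K ≤ W1) (hle2 : H ⊓ K ≤ W2) (hle3 : H ⊓ K ≤ W3) (hle4 : H ⊓ K ≤ W4)
    (hsub : ∀ L ∈ A, H ⊓ K ≤ L → L = W1 ∨ L = W2 ∨ L = W3 ∨ L = W4) :
    η ⟨H, hH⟩ = η ⟨K, hK⟩ := by
  have hflat := flatHyps_eq_four h1 h2 h3 h4 hle1 hle2 hle3 hle4 hsub
  have hcard : (flatHyps A (H ⊓ K)).card = 4 := by
    rw [hflat, Finset.card_insert_of_notMem (by simp [hd12, hd13, hd14]),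
      Finset.card_insert_of_notMem (by simp [hd23, hd24]),
      Finset.card_insert_of_notMem (by simp [hd34]), Finset.card_singleton]
  exact (hc _ (isRank2Flat_inf hH hK hne)).2 (by rw [hcard]; decide)
    _ (mem_flatHyps.2 inf_le_left) _ (mem_flatHyps.2 inf_le_right)

/-- the η-independent sum rule for an m = 3 flat. -/
lemma eta_sum_flat3 {A : Finset (Hyp l)} {H K W1 W2 W3 : Hyp l} (hH : H ∈ A) (hK : K ∈ A)
    (hne : H ≠ K) (h1 : W1 ∈ A) (h2 : W2 ∈ A) (h3 : W3 ∈ A)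
    (hd12 : W1 ≠ W2) (hd13 : W1 ≠ W3) (hd23 : W2 ≠ W3)
    (hle1 : H ⊓ K ≤ W1) (hle2 : H ⊓ K ≤ W2) (hle3 : H ⊓ K ≤ W3)
    (hsub : ∀ L ∈ A, H ⊓ K ≤ L → L = W1 ∨ L = W2 ∨ L = W3) :
    ∀ η : {H // H ∈ A} → ZMod 3, IsCocycle 3 A η →
      η ⟨W1, h1⟩ + η ⟨W2, h2⟩ + η ⟨W3, h3⟩ = 0 := by
  intro η hcη
  have hflat := flatHyps_eq_three h1 h2 h3 hle1 hle2 hle3 hsub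
  have hcard : (flatHyps A (H ⊓ K)).card = 3 := by
    rw [hflat, Finset.card_insert_of_notMem (by simp [hd12, hd13]),
      Finset.card_insert_of_notMem (by simp [hd23]), Finset.card_singleton]
  have hs := (hcη _ (isRank2Flat_inf hH hK hne)).1 (by rw [hcard])
  rw [hflat, Finset.sum_insert (by simp [hd12, hd13]),
    Finset.sum_insert (by simp [hd23]), Finset.sum_singleton] at hs
  linear_combination hs

end Beta3
namespace Beta3

variable {l : ℕ}

/-- The data extracted from a nonconstant cocycle : a 3-element flat containing the two
hyperplanes where it differs, of one of three combinatorial types. -/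
def SpecialData (G : SGraph l) (H' K' : {H // H ∈ graphArr G}) : Prop :=
  ∃ T1 T2 T3 : {H // H ∈ graphArr G},
    (∀ η : {H // H ∈ graphArr G} → ZMod 3, IsCocycle 3 (graphArr G) η →
      η T1 + η T2 + η T3 = 0) ∧
    (H' = T1 ∨ H' = T2 ∨ H' = T3) ∧ (K' = T1 ∨ K' = T2 ∨ K' = T3) ∧
    ((∃ i j k : Fin l, ∃ ε δ σ : Bool, i ≠ j ∧ i ≠ k ∧ j ≠ k ∧
        T1.1 = edgeHyp i j ε ∧ T2.1 = edgeHyp j k δ ∧ T3.1 = edgeHyp i k σ) ∨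
     (∃ i j : Fin l, ∃ ε : Bool, i ≠ j ∧ T1.1 = loopHyp i ∧ T2.1 = loopHyp j ∧
        T3.1 = edgeHyp i j ε ∧ edgeHyp i j (!ε) ∉ graphArr G) ∨
     (∃ i j : Fin l, i ≠ j ∧ T1.1 = loopHyp i ∧ loopHyp j ∉ graphArr G ∧
        T2.1 = edgeHyp i j true ∧ T3.1 = edgeHyp i j false))

lemma specialData_symm {G : SGraph l} {H' K' : {H // H ∈ graphArr G}}
    (h : SpecialData G H' K') : SpecialData G K' H' := by
  obtain ⟨T1, T2, T3, hs, h1, h2, hd⟩ := h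
  exact ⟨T1, T2, T3, hs, h2, h1, hd⟩

/-- Pair-type flats : both hyperplanes supported on `{i,j}`. -/
lemma special_pair {G : SGraph l} {η₀ : {H // H ∈ graphArr G} → ZMod 3}
    (hc0 : IsCocycle 3 (graphArr G) η₀) {i j : Fin l} (hij : i ≠ j) {H K : Hyp l}
    (hH : H ∈ graphArr G) (hK : K ∈ graphArr G) (hne : H ≠ K)
    (hHp : H = loopHyp i ∨ H = loopHyp j ∨ H = edgeHyp i j true ∨ H = edgeHyp i j false)
    (hKp : K = loopHyp i ∨ K = loopHyp j ∨ K = edgeHyp i j true ∨ K = edgeHyp i j false)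
    (hinf : ∀ x, x ∈ H → x ∈ K → x i = 0 ∧ x j = 0)
    (hv : η₀ ⟨H, hH⟩ ≠ η₀ ⟨K, hK⟩) : SpecialData G ⟨H, hH⟩ ⟨K, hK⟩ := by
  have hinf' : ∀ x ∈ H ⊓ K, x i = 0 ∧ x j = 0 := fun x hx =>
    hinf x (Submodule.mem_inf.1 hx).1 (Submodule.mem_inf.1 hx).2
  have hle_li : H ⊓ K ≤ loopHyp i := fun x hx => mem_loopHyp_of_zero (hinf' x hx).1
  have hle_lj : H ⊓ K ≤ loopHyp j := fun x hx => mem_loopHyp_of_zero (hinf' x hx).2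
  have hle_t : H ⊓ K ≤ edgeHyp i j true := fun x hx =>
    mem_edgeHyp_of_zero (hinf' x hx).1 (hinf' x hx).2
  have hle_f : H ⊓ K ≤ edgeHyp i j false := fun x hx =>
    mem_edgeHyp_of_zero (hinf' x hx).1 (hinf' x hx).2
  have hevP : ∀ (W : Hyp l), (W = loopHyp i ∨ W = loopHyp j ∨ W = edgeHyp i j true ∨
      W = edgeHyp i j false) → ∀ t : Fin l, t ≠ i → t ≠ j → ev t ∈ W := by
    intro W hW t hti htj
    rcases hW with rfl | rfl | rfl | rfl
    exacts [ev_mem_loopHyp (Ne.symm hti), ev_mem_loopHyp (Ne.symm htj),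
      ev_mem_edgeHyp (Ne.symm hti) (Ne.symm htj) _,
      ev_mem_edgeHyp (Ne.symm hti) (Ne.symm htj) _]
  have hsub0 : ∀ L ∈ graphArr G, H ⊓ K ≤ L →
      L = loopHyp i ∨ L = loopHyp j ∨ L = edgeHyp i j true ∨ L = edgeHyp i j false := by
    intro L hL hle
    exact S1 hij hL (fun t hti htj => hle (Submodule.mem_inf.2
      ⟨hevP H hHp t hti htj, hevP K hKp t hti htj⟩))
  have d_ll : loopHyp i ≠ loopHyp j := fun h => hij (loopHyp_injective h)
  have d_it : loopHyp i ≠ edgeHyp i j true := loopHyp_ne_edgeHyp hij true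
  have d_if : loopHyp i ≠ edgeHyp i j false := loopHyp_ne_edgeHyp hij false
  have d_jt : loopHyp j ≠ edgeHyp i j true := loopHyp_ne_edgeHyp hij true
  have d_jf : loopHyp j ≠ edgeHyp i j false := loopHyp_ne_edgeHyp hij false
  have d_tf : edgeHyp i j true ≠ edgeHyp i j false := edge_sign_ne hij (by simp)
  have hmemH : ∀ (W : Hyp l) (hW : W ∈ graphArr G) (T1 T2 T3 : {H // H ∈ graphArr G}),
      (W = T1.1 ∨ W = T2.1 ∨ W = T3.1) →
      ((⟨W, hW⟩ : {H // H ∈ graphArr G}) = T1 ∨ (⟨W, hW⟩ : {H // H ∈ graphArr G}) = T2 ∨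
       (⟨W, hW⟩ : {H // H ∈ graphArr G}) = T3) := by
    rintro W hW ⟨t1, ht1⟩ ⟨t2, ht2⟩ ⟨t3, ht3⟩ (h | h | h)
    exacts [Or.inl (Subtype.ext h), Or.inr (Or.inl (Subtype.ext h)),
      Or.inr (Or.inr (Subtype.ext h))]
  by_cases pli : loopHyp i ∈ graphArr G
  · by_cases plj : loopHyp j ∈ graphArr G
    · by_cases pet : edgeHyp i j true ∈ graphArr G
      · by_cases pef : edgeHyp i j false ∈ graphArr G
        · -- all four present : constant, contradiction
          exact absurd (eta_const_four hc0 hH hK hne pli plj pet pef d_ll d_it d_if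
            d_jt d_jf d_tf hle_li hle_lj hle_t hle_f hsub0) hv
        · -- {loop i, loop j, edge+} : pair1 data with ε = true
          have hsub3 : ∀ L ∈ graphArr G, H ⊓ K ≤ L →
              L = loopHyp i ∨ L = loopHyp j ∨ L = edgeHyp i j true := by
            intro L hL hle
            rcases hsub0 L hL hle with h | h | h | h
            exacts [Or.inl h, Or.inr (Or.inl h), Or.inr (Or.inr h),
              absurd (h ▸ hL) pef]
          refine ⟨⟨_, pli⟩, ⟨_, plj⟩, ⟨_, pet⟩,
            eta_sum_flat3 hH hK hne pli plj pet d_ll d_it d_jt hle_li hle_lj hle_t hsub3,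
            hmemH H hH _ _ _ (hsub3 H hH inf_le_left),
            hmemH K hK _ _ _ (hsub3 K hK inf_le_right),
            Or.inr (Or.inl ⟨i, j, true, hij, rfl, rfl, rfl, by simpa using pef⟩)⟩
      · by_cases pef : edgeHyp i j false ∈ graphArr G
        · -- {loop i, loop j, edge−} : pair1 data with ε = false
          have hsub3 : ∀ L ∈ graphArr G, H ⊓ K ≤ L →
              L = loopHyp i ∨ L = loopHyp j ∨ L = edgeHyp i j false := by
            intro L hL hle
            rcases hsub0 L hL hle with h | h | h | h
            exacts [Or.inl h, Or.inr (Or.inl h), absurd (h ▸ hL) pet,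
              Or.inr (Or.inr h)]
          refine ⟨⟨_, pli⟩, ⟨_, plj⟩, ⟨_, pef⟩,
            eta_sum_flat3 hH hK hne pli plj pef d_ll d_if d_jf hle_li hle_lj hle_f hsub3,
            hmemH H hH _ _ _ (hsub3 H hH inf_le_left),
            hmemH K hK _ _ _ (hsub3 K hK inf_le_right),
            Or.inr (Or.inl ⟨i, j, false, hij, rfl, rfl, rfl, by simpa using pet⟩)⟩
        · -- {loop i, loop j} only : m = 2, contradiction
          have hsub2 : ∀ L ∈ graphArr G, H ⊓ K ≤ L →
              L = loopHyp i ∨ L = loopHyp j := by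
            intro L hL hle
            rcases hsub0 L hL hle with h | h | h | h
            exacts [Or.inl h, Or.inr h, absurd (h ▸ hL) pet, absurd (h ▸ hL) pef]
          exact absurd (eta_const_two hc0 hH hK hne pli plj d_ll hle_li hle_lj hsub2) hv
    · by_cases pet : edgeHyp i j true ∈ graphArr G
      · by_cases pef : edgeHyp i j false ∈ graphArr G
        · -- {loop i, edge+, edge−} : pair2 data
          have hsub3 : ∀ L ∈ graphArr G, H ⊓ K ≤ L →
              L = loopHyp i ∨ L = edgeHyp i j true ∨ L = edgeHyp i j false := by
            intro L hL hle
            rcases hsub0 L hL hle with h | h | h | h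
            exacts [Or.inl h, absurd (h ▸ hL) plj, Or.inr (Or.inl h), Or.inr (Or.inr h)]
          refine ⟨⟨_, pli⟩, ⟨_, pet⟩, ⟨_, pef⟩,
            eta_sum_flat3 hH hK hne pli pet pef d_it d_if d_tf hle_li hle_t hle_f hsub3,
            hmemH H hH _ _ _ (hsub3 H hH inf_le_left),
            hmemH K hK _ _ _ (hsub3 K hK inf_le_right),
            Or.inr (Or.inr ⟨i, j, hij, rfl, plj, rfl, rfl⟩)⟩
        · -- {loop i, edge+} : m = 2, contradiction
          have hsub2 : ∀ L ∈ graphArr G, H ⊓ K ≤ L →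
              L = loopHyp i ∨ L = edgeHyp i j true := by
            intro L hL hle
            rcases hsub0 L hL hle with h | h | h | h
            exacts [Or.inl h, absurd (h ▸ hL) plj, Or.inr h, absurd (h ▸ hL) pef]
          exact absurd (eta_const_two hc0 hH hK hne pli pet d_it hle_li hle_t hsub2) hv
      · by_cases pef : edgeHyp i j false ∈ graphArr G
        · -- {loop i, edge−} : m = 2, contradiction
          have hsub2 : ∀ L ∈ graphArr G, H ⊓ K ≤ L →
              L = loopHyp i ∨ L = edgeHyp i j false := by
            intro L hL hle
            rcases hsub0 L hL hle with h | h | h | h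
            exacts [Or.inl h, absurd (h ▸ hL) plj, absurd (h ▸ hL) pet, Or.inr h]
          exact absurd (eta_const_two hc0 hH hK hne pli pef d_if hle_li hle_f hsub2) hv
        · -- only loop i : impossible since H ≠ K
          have hsub1 : ∀ L ∈ graphArr G, H ⊓ K ≤ L → L = loopHyp i := by
            intro L hL hle
            rcases hsub0 L hL hle with h | h | h | h
            exacts [h, absurd (h ▸ hL) plj, absurd (h ▸ hL) pet, absurd (h ▸ hL) pef]
          exact absurd ((hsub1 H hH inf_le_left).trans
            (hsub1 K hK inf_le_right).symm) hne
  · by_cases plj : loopHyp j ∈ graphArr G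
    · by_cases pet : edgeHyp i j true ∈ graphArr G
      · by_cases pef : edgeHyp i j false ∈ graphArr G
        · -- {loop j, edge+, edge−} : pair2 data with i, j swapped
          have hsub3 : ∀ L ∈ graphArr G, H ⊓ K ≤ L →
              L = loopHyp j ∨ L = edgeHyp i j true ∨ L = edgeHyp i j false := by
            intro L hL hle
            rcases hsub0 L hL hle with h | h | h | h
            exacts [absurd (h ▸ hL) pli, Or.inl h, Or.inr (Or.inl h), Or.inr (Or.inr h)]
          refine ⟨⟨_, plj⟩, ⟨_, pet⟩, ⟨_, pef⟩,
            eta_sum_flat3 hH hK hne plj pet pef d_jt d_jf d_tf hle_lj hle_t hle_f hsub3,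
            hmemH H hH _ _ _ (hsub3 H hH inf_le_left),
            hmemH K hK _ _ _ (hsub3 K hK inf_le_right),
            Or.inr (Or.inr ⟨j, i, Ne.symm hij, rfl, pli, edgeHyp_symm i j true,
              edgeHyp_symm i j false⟩)⟩
        · have hsub2 : ∀ L ∈ graphArr G, H ⊓ K ≤ L →
              L = loopHyp j ∨ L = edgeHyp i j true := by
            intro L hL hle
            rcases hsub0 L hL hle with h | h | h | h
            exacts [absurd (h ▸ hL) pli, Or.inl h, Or.inr h, absurd (h ▸ hL) pef]
          exact absurd (eta_const_two hc0 hH hK hne plj pet d_jt hle_lj hle_t hsub2) hv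
      · by_cases pef : edgeHyp i j false ∈ graphArr G
        · have hsub2 : ∀ L ∈ graphArr G, H ⊓ K ≤ L →
              L = loopHyp j ∨ L = edgeHyp i j false := by
            intro L hL hle
            rcases hsub0 L hL hle with h | h | h | h
            exacts [absurd (h ▸ hL) pli, Or.inl h, absurd (h ▸ hL) pet, Or.inr h]
          exact absurd (eta_const_two hc0 hH hK hne plj pef d_jf hle_lj hle_f hsub2) hv
        · have hsub1 : ∀ L ∈ graphArr G, H ⊓ K ≤ L → L = loopHyp j := by
            intro L hL hle
            rcases hsub0 L hL hle with h | h | h | h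
            exacts [absurd (h ▸ hL) pli, h, absurd (h ▸ hL) pet, absurd (h ▸ hL) pef]
          exact absurd ((hsub1 H hH inf_le_left).trans
            (hsub1 K hK inf_le_right).symm) hne
    · by_cases pet : edgeHyp i j true ∈ graphArr G
      · by_cases pef : edgeHyp i j false ∈ graphArr G
        · -- {edge+, edge−} : m = 2, contradiction
          have hsub2 : ∀ L ∈ graphArr G, H ⊓ K ≤ L →
              L = edgeHyp i j true ∨ L = edgeHyp i j false := by
            intro L hL hle
            rcases hsub0 L hL hle with h | h | h | h
            exacts [absurd (h ▸ hL) pli, absurd (h ▸ hL) plj, Or.inl h, Or.inr h]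
          exact absurd (eta_const_two hc0 hH hK hne pet pef d_tf hle_t hle_f hsub2) hv
        · have hsub1 : ∀ L ∈ graphArr G, H ⊓ K ≤ L → L = edgeHyp i j true := by
            intro L hL hle
            rcases hsub0 L hL hle with h | h | h | h
            exacts [absurd (h ▸ hL) pli, absurd (h ▸ hL) plj, h, absurd (h ▸ hL) pef]
          exact absurd ((hsub1 H hH inf_le_left).trans
            (hsub1 K hK inf_le_right).symm) hne
      · by_cases pef : edgeHyp i j false ∈ graphArr G
        · have hsub1 : ∀ L ∈ graphArr G, H ⊓ K ≤ L → L = edgeHyp i j false := by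
            intro L hL hle
            rcases hsub0 L hL hle with h | h | h | h
            exacts [absurd (h ▸ hL) pli, absurd (h ▸ hL) plj, absurd (h ▸ hL) pet, h]
          exact absurd ((hsub1 H hH inf_le_left).trans
            (hsub1 K hK inf_le_right).symm) hne
        · rcases hsub0 H hH inf_le_left with h | h | h | h
          exacts [absurd (h ▸ hH) pli, absurd (h ▸ hH) plj, absurd (h ▸ hH) pet,
            absurd (h ▸ hH) pef]

end Beta3
namespace Beta3

variable {l : ℕ}

/-- Triangle-type flats : two edges sharing the vertex `s`. -/
lemma special_shared {G : SGraph l} {η₀ : {H // H ∈ graphArr G} → ZMod 3}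
    (hc0 : IsCocycle 3 (graphArr G) η₀) {a s b : Fin l} {ε δ : Bool}
    (has : a ≠ s) (hab : a ≠ b) (hsb : s ≠ b)
    (h1 : edgeHyp a s ε ∈ graphArr G) (h2 : edgeHyp s b δ ∈ graphArr G)
    (hv : η₀ ⟨edgeHyp a s ε, h1⟩ ≠ η₀ ⟨edgeHyp s b δ, h2⟩) :
    SpecialData G ⟨edgeHyp a s ε, h1⟩ ⟨edgeHyp s b δ, h2⟩ := by
  have hne : edgeHyp a s ε ≠ edgeHyp s b δ :=
    edgeHyp_ne_of_pairs has ε δ (fun h => by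
      rcases h with ⟨ha, hb⟩ | ⟨ha, hb⟩
      exacts [has ha, hab ha])
  have hne2 : edgeHyp a s ε ≠ edgeHyp a b (xor ε δ) :=
    edgeHyp_ne_of_pairs has ε (xor ε δ) (fun h => by
      rcases h with ⟨ha, hb⟩ | ⟨ha, hb⟩
      exacts [hsb hb, hab ha])
  have hne3 : edgeHyp s b δ ≠ edgeHyp a b (xor ε δ) :=
    edgeHyp_ne_of_pairs hsb δ (xor ε δ) (fun h => by
      rcases h with ⟨ha, hb⟩ | ⟨ha, hb⟩
      exacts [has ha.symm, hsb ha])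
  have hsub0 : ∀ L ∈ graphArr G, edgeHyp a s ε ⊓ edgeHyp s b δ ≤ L →
      L = edgeHyp a s ε ∨ L = edgeHyp s b δ ∨ L = edgeHyp a b (xor ε δ) := by
    intro L hL hle
    apply S4 has hab hsb ε δ hL
    · intro t hta hts htb
      exact hle (Submodule.mem_inf.2
        ⟨ev_mem_edgeHyp (Ne.symm hta) (Ne.symm hts) ε,
         ev_mem_edgeHyp (Ne.symm hts) (Ne.symm htb) δ⟩)
    · exact hle (Submodule.mem_inf.2 ⟨wv3_mem_1 b has ε δ, wv3_mem_2 has hab hsb ε δ⟩)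
  by_cases hN : edgeHyp a b (xor ε δ) ∈ graphArr G
  · refine ⟨⟨_, h1⟩, ⟨_, h2⟩, ⟨_, hN⟩,
      eta_sum_flat3 h1 h2 hne h1 h2 hN hne hne2 hne3 inf_le_left inf_le_right
        (le_third ε δ) hsub0,
      Or.inl rfl, Or.inr (Or.inl rfl),
      Or.inl ⟨a, s, b, ε, δ, xor ε δ, has, hab, hsb, rfl, rfl, rfl⟩⟩
  · refine absurd (eta_const_two hc0 h1 h2 hne h1 h2 hne inf_le_left inf_le_right ?_) hv
    intro L hL hle
    rcases hsub0 L hL hle with h | h | h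
    exacts [Or.inl h, Or.inr h, absurd (h ▸ hL) hN]

/-- loop vs edge. -/
lemma special_loop_edge {G : SGraph l} {η₀ : {H // H ∈ graphArr G} → ZMod 3}
    (hc0 : IsCocycle 3 (graphArr G) η₀) {m u v : Fin l} {γ : Bool} (huv : u ≠ v)
    (hm : loopHyp m ∈ graphArr G) (he : edgeHyp u v γ ∈ graphArr G)
    (hv : η₀ ⟨loopHyp m, hm⟩ ≠ η₀ ⟨edgeHyp u v γ, he⟩) :
    SpecialData G ⟨loopHyp m, hm⟩ ⟨edgeHyp u v γ, he⟩ := by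
  by_cases hmu : m = u
  · subst hmu
    refine special_pair hc0 huv hm he (loopHyp_ne_edgeHyp huv γ) (Or.inl rfl) ?_
      (fun x hx1 hx2 => pair_inf_loop_edge hx1 hx2) hv
    cases γ
    · exact Or.inr (Or.inr (Or.inr rfl))
    · exact Or.inr (Or.inr (Or.inl rfl))
  · by_cases hmv : m = v
    · subst hmv
      refine special_pair hc0 huv hm he (loopHyp_ne_edgeHyp huv γ) (Or.inr (Or.inl rfl))
        ?_ (fun x hx1 hx2 => pair_inf_loop_edge' hx1 hx2) hv
      cases γ
      · exact Or.inr (Or.inr (Or.inr rfl))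
      · exact Or.inr (Or.inr (Or.inl rfl))
    · exact absurd (W_loop_edge hc0 hmu hmv huv hm he) hv

/-- The classification of the special flat of a nonconstant cocycle. -/
lemma special {G : SGraph l} {η₀ : {H // H ∈ graphArr G} → ZMod 3}
    (hc0 : IsCocycle 3 (graphArr G) η₀) (H' K' : {H // H ∈ graphArr G})
    (hv : η₀ H' ≠ η₀ K') : SpecialData G H' K' := by
  obtain ⟨H, hH⟩ := H'
  obtain ⟨K, hK⟩ := K'
  have hne : H ≠ K := fun h => hv (congrArg η₀ (Subtype.ext h))
  rcases mem_graphArr.1 hH with ⟨m, _, rfl⟩ | ⟨⟨p, q, d⟩, hpe, rfl⟩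
  · rcases mem_graphArr.1 hK with ⟨n, _, rfl⟩ | ⟨⟨u, v, e⟩, hue, rfl⟩
    · -- loop, loop
      have hmn : m ≠ n := fun h => hne (by rw [h])
      exact special_pair hc0 hmn hH hK hne (Or.inl rfl) (Or.inr (Or.inl rfl))
        (fun x hx1 hx2 => ⟨mem_loopHyp.1 hx1, mem_loopHyp.1 hx2⟩) hv
    · -- loop, edge
      simp only at hK hne hv ⊢
      exact special_loop_edge hc0 (ne_of_lt (G.edges_lt _ hue)) hH hK hv
  · rcases mem_graphArr.1 hK with ⟨n, _, rfl⟩ | ⟨⟨u, v, e⟩, hue, rfl⟩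
    · -- edge, loop
      simp only at hH hne hv ⊢
      exact specialData_symm
        (special_loop_edge hc0 (ne_of_lt (G.edges_lt _ hpe)) hK hH (Ne.symm hv))
    · -- edge, edge
      simp only at hH hK hne hv ⊢
      have hlt1 : p < q := G.edges_lt _ hpe
      have hlt2 : u < v := G.edges_lt _ hue
      have hpq : p ≠ q := ne_of_lt hlt1
      have huv : u ≠ v := ne_of_lt hlt2
      by_cases hpu : p = u
      · by_cases hqv : q = v
        · -- same pair
          have hde : d ≠ e := fun h => hne (by rw [hpu, hqv, h])
          refine special_pair hc0 hpq hH hK hne ?_ ?_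
            (fun x hx1 hx2 => pair_inf_edges hde hx1 (by rw [hpu, hqv]; exact hx2)) hv
          · cases d
            · exact Or.inr (Or.inr (Or.inr rfl))
            · exact Or.inr (Or.inr (Or.inl rfl))
          · cases e
            · exact Or.inr (Or.inr (Or.inr (by rw [hpu, hqv])))
            · exact Or.inr (Or.inr (Or.inl (by rw [hpu, hqv])))
        · -- shared vertex p = u : a = q, s = p, b = v
          subst hpu
          have h1' : edgeHyp q p d ∈ graphArr G := by rw [edgeHyp_symm]; exact hH
          have heq1 : (⟨edgeHyp p q d, hH⟩ : {H // H ∈ graphArr G}) = ⟨edgeHyp q p d, h1'⟩ :=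
            Subtype.ext (edgeHyp_symm p q d)
          rw [heq1] at hv ⊢
          exact special_shared hc0 (Ne.symm hpq) hqv huv h1' hK hv
      · by_cases hpv : p = v
        · -- shared vertex p = v : a = q, s = p, b = u
          subst hpv
          have h1' : edgeHyp q p d ∈ graphArr G := by rw [edgeHyp_symm]; exact hH
          have h2' : edgeHyp p u e ∈ graphArr G := by rw [edgeHyp_symm]; exact hK
          have heq1 : (⟨edgeHyp p q d, hH⟩ : {H // H ∈ graphArr G}) = ⟨edgeHyp q p d, h1'⟩ :=
            Subtype.ext (edgeHyp_symm p q d)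
          have heq2 : (⟨edgeHyp u p e, hK⟩ : {H // H ∈ graphArr G}) = ⟨edgeHyp p u e, h2'⟩ :=
            Subtype.ext (edgeHyp_symm u p e)
          rw [heq1, heq2] at hv ⊢
          have hqu : q ≠ u := Ne.symm (ne_of_lt (lt_trans hlt2 hlt1))
          exact special_shared hc0 (Ne.symm hpq) hqu hpu h1' h2' hv
        · by_cases hqu : q = u
          · -- shared vertex q = u : a = p, s = q, b = v
            subst hqu
            exact special_shared hc0 hpq (ne_of_lt (lt_trans hlt1 hlt2)) huv hH hK hv
          · by_cases hqv : q = v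
            · -- shared vertex q = v : a = p, s = q, b = u
              subst hqv
              have h2' : edgeHyp q u e ∈ graphArr G := by rw [edgeHyp_symm]; exact hK
              have heq2 : (⟨edgeHyp u q e, hK⟩ : {H // H ∈ graphArr G}) =
                  ⟨edgeHyp q u e, h2'⟩ := Subtype.ext (edgeHyp_symm u q e)
              rw [heq2] at hv ⊢
              exact special_shared hc0 hpq hpu (Ne.symm (ne_of_lt hlt2)) hH h2' hv
            · -- disjoint
              exact absurd (W_disjoint hc0 hpq huv hpu hpv hqu hqv hH hK) hv

end Beta3
namespace Beta3

variable {l : ℕ}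

/-- A cocycle vanishing at the two distinguished hyperplanes of a special flat
vanishes identically. -/
lemma vanish_of_special {G : SGraph l} {H' K' : {H // H ∈ graphArr G}}
    (hd : SpecialData G H' K') {η : {H // H ∈ graphArr G} → ZMod 3}
    (hcη : IsCocycle 3 (graphArr G) η) (hne : H' ≠ K')
    (h1 : η H' = 0) (h2 : η K' = 0) : ∀ L : {H // H ∈ graphArr G}, η L = 0 := by
  obtain ⟨T1, T2, T3, hsum, hm1, hm2, hdata⟩ := hd
  have hs := hsum η hcη
  have hz : η T1 = 0 ∧ η T2 = 0 ∧ η T3 = 0 := by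
    rcases hm1 with rfl | rfl | rfl <;> rcases hm2 with rfl | rfl | rfl
    · exact absurd rfl hne
    · exact ⟨h1, h2, by rw [h1, h2] at hs; linear_combination hs⟩
    · exact ⟨h1, by rw [h1, h2] at hs; linear_combination hs, h2⟩
    · exact ⟨h2, h1, by rw [h1, h2] at hs; linear_combination hs⟩
    · exact absurd rfl hne
    · exact ⟨by rw [h1, h2] at hs; linear_combination hs, h1, h2⟩
    · exact ⟨h2, by rw [h1, h2] at hs; linear_combination hs, h1⟩
    · exact ⟨by rw [h1, h2] at hs; linear_combination hs, h2, h1⟩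
    · exact absurd rfl hne
  obtain ⟨z1, z2, z3⟩ := hz
  rcases hdata with ⟨i, j, k, ε, δ, σ, hij, hik, hjk, e1, e2, e3⟩ |
      ⟨i, j, ε, hij, e1, e2, e3, habs⟩ | ⟨i, j, hij, e1, habs, e2, e3⟩
  · have m1 : edgeHyp i j ε ∈ graphArr G := e1 ▸ T1.2
    have m2 : edgeHyp j k δ ∈ graphArr G := e2 ▸ T2.2
    have m3 : edgeHyp i k σ ∈ graphArr G := e3 ▸ T3.2
    have z1' : η ⟨edgeHyp i j ε, m1⟩ = 0 := by
      rw [← show T1 = ⟨edgeHyp i j ε, m1⟩ from Subtype.ext e1]; exact z1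
    have z2' : η ⟨edgeHyp j k δ, m2⟩ = 0 := by
      rw [← show T2 = ⟨edgeHyp j k δ, m2⟩ from Subtype.ext e2]; exact z2
    have z3' : η ⟨edgeHyp i k σ, m3⟩ = 0 := by
      rw [← show T3 = ⟨edgeHyp i k σ, m3⟩ from Subtype.ext e3]; exact z3
    intro ⟨Lv, hL⟩
    exact vanish_tri hcη hij hik hjk m1 m2 m3 z1' z2' z3' Lv hL
  · have m1 : loopHyp i ∈ graphArr G := e1 ▸ T1.2
    have m2 : loopHyp j ∈ graphArr G := e2 ▸ T2.2
    have m3 : edgeHyp i j ε ∈ graphArr G := e3 ▸ T3.2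
    have z1' : η ⟨loopHyp i, m1⟩ = 0 := by
      rw [← show T1 = ⟨loopHyp i, m1⟩ from Subtype.ext e1]; exact z1
    have z2' : η ⟨loopHyp j, m2⟩ = 0 := by
      rw [← show T2 = ⟨loopHyp j, m2⟩ from Subtype.ext e2]; exact z2
    have z3' : η ⟨edgeHyp i j ε, m3⟩ = 0 := by
      rw [← show T3 = ⟨edgeHyp i j ε, m3⟩ from Subtype.ext e3]; exact z3
    intro ⟨Lv, hL⟩
    exact vanish_pair1 hcη hij m1 m2 m3 habs z1' z2' z3' Lv hL
  · have m1 : loopHyp i ∈ graphArr G := e1 ▸ T1.2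
    have m2 : edgeHyp i j true ∈ graphArr G := e2 ▸ T2.2
    have m3 : edgeHyp i j false ∈ graphArr G := e3 ▸ T3.2
    have z1' : η ⟨loopHyp i, m1⟩ = 0 := by
      rw [← show T1 = ⟨loopHyp i, m1⟩ from Subtype.ext e1]; exact z1
    have z2' : η ⟨edgeHyp i j true, m2⟩ = 0 := by
      rw [← show T2 = ⟨edgeHyp i j true, m2⟩ from Subtype.ext e2]; exact z2
    have z3' : η ⟨edgeHyp i j false, m3⟩ = 0 := by
      rw [← show T3 = ⟨edgeHyp i j false, m3⟩ from Subtype.ext e3]; exact z3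
    intro ⟨Lv, hL⟩
    exact vanish_pair2 hcη hij m1 habs m2 m3 z1' z2' z3' Lv hL

end Beta3

/-- Let `Γ` be a graph in `[l]` whose graphic arrangement has rank greater than 2. Then
`β₃(Γ) ≤ 1`: the `𝔽₃`-vector space of 3-cocycles `η : A(Γ) → 𝔽₃` has dimension at
most 2. -/
theorem beta3_le_one {l : ℕ} (G : SGraph l) (hrk : 2 < arrRank (graphArr G)) :
    Module.finrank (ZMod 3) ↥(cocycleSubmodule 3 (graphArr G)) ≤ 2 := by
  haveI : Fact (Nat.Prime 3) := ⟨by norm_num⟩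
  by_cases hex : ∃ η₀ ∈ cocycleSubmodule 3 (graphArr G),
      ∃ H' K' : {H // H ∈ graphArr G}, η₀ H' ≠ η₀ K'
  · obtain ⟨η₀, h0, H', K', hv⟩ := hex
    have hc0 : IsCocycle 3 (graphArr G) η₀ := h0
    have hd := Beta3.special hc0 H' K' hv
    have hne : H' ≠ K' := fun h => hv (by rw [h])
    let φ : ↥(cocycleSubmodule 3 (graphArr G)) →ₗ[ZMod 3] ZMod 3 × ZMod 3 :=
      LinearMap.prod ((LinearMap.proj H').comp (Submodule.subtype _))
        ((LinearMap.proj K').comp (Submodule.subtype _))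
    have hinj : Function.Injective φ := by
      rw [injective_iff_map_eq_zero]
      rintro ⟨η, hη⟩ hφ
      have hη' : IsCocycle 3 (graphArr G) η := hη
      have h1 : η H' = 0 := congrArg Prod.fst hφ
      have h2 : η K' = 0 := congrArg Prod.snd hφ
      have := Beta3.vanish_of_special hd hη' hne h1 h2
      exact Subtype.ext (funext fun L => this L)
    calc Module.finrank (ZMod 3) ↥(cocycleSubmodule 3 (graphArr G))
        ≤ Module.finrank (ZMod 3) (ZMod 3 × ZMod 3) :=
          LinearMap.finrank_le_finrank_of_injective hinj
      _ = 2 := by simp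
  · push_neg at hex
    by_cases hA : Nonempty {H // H ∈ graphArr G}
    · obtain ⟨H₀⟩ := hA
      let φ : ↥(cocycleSubmodule 3 (graphArr G)) →ₗ[ZMod 3] ZMod 3 :=
        (LinearMap.proj H₀).comp (Submodule.subtype _)
      have hinj : Function.Injective φ := by
        rw [injective_iff_map_eq_zero]
        rintro ⟨η, hη⟩ hφ
        have h0 : η H₀ = 0 := hφ
        exact Subtype.ext (funext fun L => (hex η hη L H₀).trans h0)
      calc Module.finrank (ZMod 3) ↥(cocycleSubmodule 3 (graphArr G))
          ≤ Module.finrank (ZMod 3) (ZMod 3) :=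
            LinearMap.finrank_le_finrank_of_injective hinj
        _ = 1 := Module.finrank_self _
        _ ≤ 2 := by norm_num
    · haveI : IsEmpty {H // H ∈ graphArr G} := not_nonempty_iff.1 hA
      haveI : Subsingleton ({H // H ∈ graphArr G} → ZMod 3) :=
        ⟨fun a b => funext fun x => (IsEmpty.false x).elim⟩
      haveI : Subsingleton ↥(cocycleSubmodule 3 (graphArr G)) :=
        ⟨fun a b => Subtype.ext (Subsingleton.elim _ _)⟩
      rw [Module.finrank_zero_of_subsingleton]
      norm_num
end
end

section
/- Let Γ be a graph in [l] and let i, j, k be three distinct vertices such that every pair among {i, j, k} is joined by at least one signed edge of Γ, some pair among {i, j, k} is joined by a double edge of Γ̄, some pair among {i, j, k} is joined by a simple edge of Γ̄, and Γ has no loop at any of i, j, k. Then every 3-cocycle η : A(Γ) → 𝔽_3 takes one and the same value on all hyperplanes of A(Γ) corresponding to signed edges between vertices of {i, j, k}. -/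
open scoped Classical

noncomputable section

/-- The hyperplane `H ∈ A(Γ)` corresponds to a signed edge of `Γ` with both endpoints
in the vertex set `S`. -/
def fromEdgeIn {l : ℕ} (G : SGraph l) (S : Finset (Fin l))
    (H : {H // H ∈ graphArr G}) : Prop :=
  ∃ e ∈ G.edges, e.1 ∈ S ∧ e.2.1 ∈ S ∧ (H : Hyp l) = edgeHyp e.1 e.2.1 e.2.2

namespace TriLemma

variable {l : ℕ}

def coef (b : Bool) : ℂ := if b then 1 else -1

lemma coef_ne_zero (b : Bool) : coef b ≠ 0 := by cases b <;> simp [coef]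

lemma coef_mul_self (b : Bool) : coef b * coef b = 1 := by cases b <;> simp [coef]

lemma coef_xor (b1 b2 : Bool) : coef (xor b1 b2) = -(coef b1 * coef b2) := by
  cases b1 <;> cases b2 <;> norm_num [coef]

lemma coef_inj {b b' : Bool} (h : coef b = coef b') : b = b' := by
  cases b <;> cases b' <;> simp_all [coef] <;> norm_num at h

lemma mem_edgeHyp {x y : Fin l} {b : Bool} {v : Fin l → ℂ} :
    v ∈ edgeHyp x y b ↔ v x + coef b * v y = 0 := by
  cases b <;>
  simp [edgeHyp, LinearMap.mem_ker, coef, LinearMap.add_apply, LinearMap.smul_apply,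
    LinearMap.proj_apply, smul_eq_mul, sub_eq_add_neg, neg_mul, one_mul]

lemma mem_loopHyp {x : Fin l} {v : Fin l → ℂ} :
    v ∈ loopHyp x ↔ v x = 0 := by
  simp [loopHyp, LinearMap.mem_ker, LinearMap.proj_apply]

lemma edgeHyp_comm (x y : Fin l) (b : Bool) : edgeHyp x y b = edgeHyp y x b := by
  ext v
  rw [mem_edgeHyp, mem_edgeHyp]
  cases b <;> norm_num [coef] <;>
    constructor <;> intro h <;> first | linear_combination h | linear_combination -h

/-- The coordinate vector `δ_t`. -/
def delta (t : Fin l) : Fin l → ℂ := fun u => if u = t then 1 else 0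

@[simp] lemma delta_same (t : Fin l) : delta t t = 1 := by simp [delta]

lemma delta_ne {t u : Fin l} (h : u ≠ t) : delta t u = 0 := by simp [delta, h]

lemma not_le_loopHyp {X : Hyp l} {t : Fin l} {w : Fin l → ℂ}
    (hw : w ∈ X) (hwt : w t ≠ 0) : ¬ X ≤ loopHyp t := fun h => hwt (mem_loopHyp.1 (h hw))

lemma vertex_mem_of_le {X : Hyp l} {S : Set (Fin l)} {u v : Fin l} {bb : Bool}
    (hd : ∀ t, t ∉ S → delta t ∈ X) (huv : u ≠ v) (hle : X ≤ edgeHyp u v bb) :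
    u ∈ S ∧ v ∈ S := by
  constructor
  · by_contra hu
    have := mem_edgeHyp.1 (hle (hd u hu))
    rw [delta_same, delta_ne huv.symm, mul_zero, add_zero] at this
    exact one_ne_zero this
  · by_contra hv
    have := mem_edgeHyp.1 (hle (hd v hv))
    rw [delta_same, delta_ne huv, mul_one, zero_add] at this
    exact coef_ne_zero bb this

lemma edgeHyp_ne_fst {x y x' y' : Fin l} {b b' : Bool} (hx'y' : x' ≠ y')
    (h1 : x' ≠ x) (h2 : x' ≠ y) : edgeHyp x y b ≠ edgeHyp x' y' b' := by
  intro h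
  have hm : delta x' ∈ edgeHyp x y b := by
    rw [mem_edgeHyp, delta_ne h1.symm, delta_ne h2.symm, mul_zero, add_zero]
  rw [h, mem_edgeHyp, delta_same, delta_ne hx'y'.symm, mul_zero, add_zero] at hm
  exact one_ne_zero hm

lemma edgeHyp_ne_snd {x y x' y' : Fin l} {b b' : Bool} (hx'y' : x' ≠ y')
    (h1 : y' ≠ x) (h2 : y' ≠ y) : edgeHyp x y b ≠ edgeHyp x' y' b' := by
  intro h
  have hm : delta y' ∈ edgeHyp x y b := by
    rw [mem_edgeHyp, delta_ne h1.symm, delta_ne h2.symm, mul_zero, add_zero]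
  rw [h, mem_edgeHyp, delta_ne hx'y', delta_same, mul_one, zero_add] at hm
  exact coef_ne_zero b' hm

lemma edgeHyp_sign_ne {x y : Fin l} (hxy : x ≠ y) {b b' : Bool} (hbb' : b ≠ b') :
    edgeHyp x y b ≠ edgeHyp x y b' := by
  intro h
  set w : Fin l → ℂ := fun u => if u = x then -coef b else if u = y then 1 else 0 with hw
  have hwx : w x = -coef b := by simp [hw]
  have hwy : w y = 1 := by simp [hw, hxy.symm]
  have hm : w ∈ edgeHyp x y b := by
    rw [mem_edgeHyp, hwx, hwy, mul_one, neg_add_cancel]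
  rw [h, mem_edgeHyp, hwx, hwy, mul_one] at hm
  exact hbb' (coef_inj (by linear_combination -hm))

lemma mem_graphArr {G : SGraph l} {H : Hyp l} : H ∈ graphArr G ↔
    (∃ u ∈ G.loops, H = loopHyp u) ∨ (∃ e ∈ G.edges, H = edgeHyp e.1 e.2.1 e.2.2) := by
  simp [graphArr, eq_comm]

lemma edgeHyp_mem_arr {G : SGraph l} {x y : Fin l} {b : Bool} (h : G.hasEdge x y b) :
    edgeHyp x y b ∈ graphArr G := by
  rcases h with h | h
  · exact mem_graphArr.2 (Or.inr ⟨(x, y, b), h, rfl⟩)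
  · exact mem_graphArr.2 (Or.inr ⟨(y, x, b), h, edgeHyp_comm x y b⟩)

lemma SGraph.hasEdge.symm {G : SGraph l} {x y : Fin l} {b : Bool}
    (h : G.hasEdge x y b) : G.hasEdge y x b := h.elim Or.inr Or.inl
section Flats

variable {G : SGraph l} {a b c : Fin l} {e1 e2 : Bool}

/-- Generic point of the triangle flat. -/
def w0 (a b c : Fin l) (e1 e2 : Bool) : Fin l → ℂ :=
  fun u => if u = a then -coef e1 else if u = b then 1 else if u = c then -coef e2 else 0

lemma w0_a : w0 a b c e1 e2 a = -coef e1 := by simp [w0]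
lemma w0_b (hab : a ≠ b) : w0 a b c e1 e2 b = 1 := by simp [w0, hab.symm]
lemma w0_c (hac : a ≠ c) (hbc : b ≠ c) : w0 a b c e1 e2 c = -coef e2 := by
  simp [w0, hac.symm, hbc.symm]

lemma w0_mem (hab : a ≠ b) (hac : a ≠ c) (hbc : b ≠ c) :
    w0 a b c e1 e2 ∈ edgeHyp a b e1 ⊓ edgeHyp b c e2 := by
  rw [Submodule.mem_inf, mem_edgeHyp, mem_edgeHyp, w0_a, w0_b hab, w0_c hac hbc]
  refine ⟨by ring, ?_⟩
  have := coef_mul_self e2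
  linear_combination -this

lemma delta_mem_tri {t : Fin l} (h : t ∉ ({a, b, c} : Set (Fin l))) :
    delta t ∈ edgeHyp a b e1 ⊓ edgeHyp b c e2 := by
  simp only [Set.mem_insert_iff, Set.mem_singleton_iff, not_or] at h
  rw [Submodule.mem_inf, mem_edgeHyp, mem_edgeHyp,
    delta_ne (Ne.symm h.1), delta_ne (Ne.symm h.2.1), delta_ne (Ne.symm h.2.2)]
  simp

lemma mem_flatHyps_tri (hab : a ≠ b) (hac : a ≠ c) (hbc : b ≠ c)
    (L : {H // H ∈ graphArr G}) :
    L ∈ flatHyps (graphArr G) (edgeHyp a b e1 ⊓ edgeHyp b c e2) ↔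
      ((L : Hyp l) = edgeHyp a b e1 ∨ (L : Hyp l) = edgeHyp b c e2 ∨
        ((L : Hyp l) = edgeHyp a c (xor e1 e2) ∧ G.hasEdge a c (xor e1 e2))) := by
  have hs1 := coef_mul_self e1
  have hs2 := coef_mul_self e2
  simp only [flatHyps, Finset.mem_filter, Finset.mem_attach, true_and]
  constructor
  · intro hle
    rcases mem_graphArr.1 L.2 with ⟨u, _, hL⟩ | ⟨⟨u, v, bb⟩, he, hL⟩
    · exfalso
      rw [hL] at hle
      by_cases h : u ∈ ({a, b, c} : Set (Fin l))
      · rcases h with rfl | rfl | rfl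
        · refine not_le_loopHyp (w0_mem hab hac hbc) ?_ hle
          rw [w0_a]; exact neg_ne_zero.2 (coef_ne_zero e1)
        · exact not_le_loopHyp (w0_mem hab hac hbc) (by rw [w0_b hab]; exact one_ne_zero) hle
        · refine not_le_loopHyp (w0_mem hab hac hbc) ?_ hle
          rw [w0_c hac hbc]; exact neg_ne_zero.2 (coef_ne_zero e2)
      · exact not_le_loopHyp (delta_mem_tri h) (by rw [delta_same]; exact one_ne_zero) hle
    · have huv : u ≠ v := Fin.ne_of_lt (G.edges_lt _ he)
      dsimp only at hL
      rw [hL] at hle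
      obtain ⟨hu, hv⟩ := vertex_mem_of_le (S := ({a, b, c} : Set (Fin l)))
        (fun t ht => delta_mem_tri ht) huv hle
      have hE := mem_edgeHyp.1 (hle (w0_mem hab hac hbc))
      simp only [Set.mem_insert_iff, Set.mem_singleton_iff] at hu hv
      rcases hu with rfl | rfl | rfl <;> rcases hv with rfl | rfl | rfl
      · exact absurd rfl huv
      · -- (a,b)
        rw [w0_a, w0_b hab] at hE
        have hb : bb = e1 := coef_inj (by linear_combination hE)
        exact Or.inl (by rw [hL, hb])
      · -- (a,c)
        rw [w0_a, w0_c hac hbc] at hE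
        have hb : bb = xor e1 e2 := coef_inj (by
          rw [coef_xor]; linear_combination (-coef e2) * hE - coef bb * hs2)
        subst hb
        exact Or.inr (Or.inr ⟨by rw [hL], Or.inl he⟩)
      · -- (b,a)
        rw [w0_b hab, w0_a] at hE
        have hb : bb = e1 := coef_inj (by linear_combination -coef e1 * hE - coef bb * hs1)
        exact Or.inl (by rw [hL, hb, edgeHyp_comm])
      · exact absurd rfl huv
      · -- (b,c)
        rw [w0_b hab, w0_c hac hbc] at hE
        have hb : bb = e2 := coef_inj (by linear_combination -coef e2 * hE - coef bb * hs2)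
        exact Or.inr (Or.inl (by rw [hL, hb]))
      · -- (c,a)
        rw [w0_c hac hbc, w0_a] at hE
        have hb : bb = xor e1 e2 := coef_inj (by
          rw [coef_xor]; linear_combination (-coef e1) * hE - coef bb * hs1)
        subst hb
        exact Or.inr (Or.inr ⟨by rw [hL, edgeHyp_comm], Or.inr he⟩)
      · -- (c,b)
        rw [w0_c hac hbc, w0_b hab] at hE
        have hb : bb = e2 := coef_inj (by linear_combination hE)
        exact Or.inr (Or.inl (by rw [hL, hb, edgeHyp_comm]))
      · exact absurd rfl huv
  · rintro (h | h | ⟨h, _⟩) <;> rw [h]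
    · exact inf_le_left
    · exact inf_le_right
    · intro v hv
      obtain ⟨hv1, hv2⟩ := Submodule.mem_inf.1 hv
      rw [mem_edgeHyp] at hv1 hv2 ⊢
      rw [coef_xor]
      linear_combination hv1 - coef e1 * hv2

end Flats
section Double

variable {G : SGraph l} {a b c : Fin l}

lemma mem_X2 {v : Fin l → ℂ} (hab : a ≠ b) :
    v ∈ edgeHyp a b true ⊓ edgeHyp a b false ↔ v a = 0 ∧ v b = 0 := by
  rw [Submodule.mem_inf, mem_edgeHyp, mem_edgeHyp]
  show v a + coef true * v b = 0 ∧ v a + coef false * v b = 0 ↔ _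
  norm_num [coef]
  constructor
  · rintro ⟨h1, h2⟩
    exact ⟨by linear_combination (h1 + h2) / 2, by linear_combination (h1 - h2) / 2⟩
  · rintro ⟨h1, h2⟩
    exact ⟨by linear_combination h1 + h2, by linear_combination h1 - h2⟩

lemma mem_flatHyps_double (hab : a ≠ b) (hla : a ∉ G.loops) (hlb : b ∉ G.loops)
    (L : {H // H ∈ graphArr G}) :
    L ∈ flatHyps (graphArr G) (edgeHyp a b true ⊓ edgeHyp a b false) ↔
      ((L : Hyp l) = edgeHyp a b true ∨ (L : Hyp l) = edgeHyp a b false) := by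
  have hdm : ∀ t : Fin l, t ∉ ({a, b} : Set (Fin l)) →
      delta t ∈ edgeHyp a b true ⊓ edgeHyp a b false := by
    intro t ht
    simp only [Set.mem_insert_iff, Set.mem_singleton_iff, not_or] at ht
    rw [mem_X2 hab, delta_ne (Ne.symm ht.1), delta_ne (Ne.symm ht.2)]
    exact ⟨rfl, rfl⟩
  simp only [flatHyps, Finset.mem_filter, Finset.mem_attach, true_and]
  constructor
  · intro hle
    rcases mem_graphArr.1 L.2 with ⟨u, hu, hL⟩ | ⟨⟨u, v, bb⟩, he, hL⟩
    · exfalso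
      rw [hL] at hle
      have hus : u ∉ ({a, b} : Set (Fin l)) := by
        simp only [Set.mem_insert_iff, Set.mem_singleton_iff, not_or]
        exact ⟨fun h => hla (h ▸ hu), fun h => hlb (h ▸ hu)⟩
      exact not_le_loopHyp (hdm u hus) (by rw [delta_same]; exact one_ne_zero) hle
    · have huv : u ≠ v := Fin.ne_of_lt (G.edges_lt _ he)
      dsimp only at hL
      rw [hL] at hle
      obtain ⟨hu, hv⟩ := vertex_mem_of_le (S := ({a, b} : Set (Fin l))) hdm huv hle
      simp only [Set.mem_insert_iff, Set.mem_singleton_iff] at hu hv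
      have hval : (L : Hyp l) = edgeHyp a b bb := by
        rcases hu with rfl | rfl <;> rcases hv with rfl | rfl
        · exact absurd rfl huv
        · rw [hL]
        · rw [hL, edgeHyp_comm]
        · exact absurd rfl huv
      cases bb
      · exact Or.inr hval
      · exact Or.inl hval
  · rintro (h | h) <;> rw [h]
    · exact inf_le_left
    · exact inf_le_right

end Double
section Cocycle

variable {G : SGraph l} {a b c : Fin l} {e1 e2 : Bool}
variable {η : {H // H ∈ graphArr G} → ZMod 3}

lemma double_eq (hab : a ≠ b) (hla : a ∉ G.loops) (hlb : b ∉ G.loops)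
    (ht : G.hasEdge a b true) (hf : G.hasEdge a b false)
    (hη : IsCocycle 3 (graphArr G) η) :
    η ⟨edgeHyp a b true, edgeHyp_mem_arr ht⟩ = η ⟨edgeHyp a b false, edgeHyp_mem_arr hf⟩ := by
  set L1 : {H // H ∈ graphArr G} := ⟨edgeHyp a b true, edgeHyp_mem_arr ht⟩
  set L2 : {H // H ∈ graphArr G} := ⟨edgeHyp a b false, edgeHyp_mem_arr hf⟩
  have hne : L1 ≠ L2 := fun h => edgeHyp_sign_ne hab (by simp) (Subtype.ext_iff.1 h)
  have hflat : IsRank2Flat (graphArr G) (edgeHyp a b true ⊓ edgeHyp a b false) :=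
    ⟨_, edgeHyp_mem_arr ht, _, edgeHyp_mem_arr hf, edgeHyp_sign_ne hab (by simp), rfl⟩
  have hset : flatHyps (graphArr G) (edgeHyp a b true ⊓ edgeHyp a b false) = {L1, L2} := by
    ext L
    rw [mem_flatHyps_double hab hla hlb]
    simp [L1, L2, Subtype.ext_iff]
  have hcard : (flatHyps (graphArr G) (edgeHyp a b true ⊓ edgeHyp a b false)).card = 2 := by
    rw [hset, Finset.card_insert_of_notMem (by simp [hne]), Finset.card_singleton]
  refine (hη _ hflat).2 (by rw [hcard]; norm_num) L1 ?_ L2 ?_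
  · rw [hset]; simp
  · rw [hset]; simp

lemma tri_rank2 (hab : a ≠ b) (hac : a ≠ c) (hbc : b ≠ c)
    (h1 : G.hasEdge a b e1) (h2 : G.hasEdge b c e2) :
    IsRank2Flat (graphArr G) (edgeHyp a b e1 ⊓ edgeHyp b c e2) :=
  ⟨_, edgeHyp_mem_arr h1, _, edgeHyp_mem_arr h2,
    edgeHyp_ne_snd hbc hac.symm hbc.symm, rfl⟩

lemma tri_eq (hab : a ≠ b) (hac : a ≠ c) (hbc : b ≠ c)
    (h1 : G.hasEdge a b e1) (h2 : G.hasEdge b c e2)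
    (h3 : ¬ G.hasEdge a c (xor e1 e2))
    (hη : IsCocycle 3 (graphArr G) η) :
    η ⟨edgeHyp a b e1, edgeHyp_mem_arr h1⟩ = η ⟨edgeHyp b c e2, edgeHyp_mem_arr h2⟩ := by
  set L1 : {H // H ∈ graphArr G} := ⟨edgeHyp a b e1, edgeHyp_mem_arr h1⟩
  set L2 : {H // H ∈ graphArr G} := ⟨edgeHyp b c e2, edgeHyp_mem_arr h2⟩
  have hne : L1 ≠ L2 := fun h =>
    edgeHyp_ne_snd hbc hac.symm hbc.symm (Subtype.ext_iff.1 h)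
  have hset : flatHyps (graphArr G) (edgeHyp a b e1 ⊓ edgeHyp b c e2) = {L1, L2} := by
    ext L
    rw [mem_flatHyps_tri hab hac hbc]
    simp only [Finset.mem_insert, Finset.mem_singleton, Subtype.ext_iff]
    constructor
    · rintro (h | h | ⟨h, hE⟩)
      · exact Or.inl h
      · exact Or.inr h
      · exact absurd hE h3
    · rintro (h | h)
      · exact Or.inl h
      · exact Or.inr (Or.inl h)
  have hcard : (flatHyps (graphArr G) (edgeHyp a b e1 ⊓ edgeHyp b c e2)).card = 2 := by
    rw [hset, Finset.card_insert_of_notMem (by simp [hne]), Finset.card_singleton]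
  refine (hη _ (tri_rank2 hab hac hbc h1 h2)).2 (by rw [hcard]; norm_num) L1 ?_ L2 ?_
  · rw [hset]; simp
  · rw [hset]; simp

lemma tri_sum (hab : a ≠ b) (hac : a ≠ c) (hbc : b ≠ c)
    (h1 : G.hasEdge a b e1) (h2 : G.hasEdge b c e2)
    (h3 : G.hasEdge a c (xor e1 e2))
    (hη : IsCocycle 3 (graphArr G) η) :
    η ⟨edgeHyp a b e1, edgeHyp_mem_arr h1⟩ + η ⟨edgeHyp b c e2, edgeHyp_mem_arr h2⟩
      + η ⟨edgeHyp a c (xor e1 e2), edgeHyp_mem_arr h3⟩ = 0 := by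
  set L1 : {H // H ∈ graphArr G} := ⟨edgeHyp a b e1, edgeHyp_mem_arr h1⟩
  set L2 : {H // H ∈ graphArr G} := ⟨edgeHyp b c e2, edgeHyp_mem_arr h2⟩
  set L3 : {H // H ∈ graphArr G} := ⟨edgeHyp a c (xor e1 e2), edgeHyp_mem_arr h3⟩
  have h12 : L1 ≠ L2 := fun h =>
    edgeHyp_ne_snd hbc hac.symm hbc.symm (Subtype.ext_iff.1 h)
  have h13 : L1 ≠ L3 := fun h =>
    edgeHyp_ne_snd hac hac.symm hbc.symm (Subtype.ext_iff.1 h)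
  have h23 : L2 ≠ L3 := fun h =>
    edgeHyp_ne_fst hac hab hac (Subtype.ext_iff.1 h)
  have hset : flatHyps (graphArr G) (edgeHyp a b e1 ⊓ edgeHyp b c e2) = {L1, L2, L3} := by
    ext L
    rw [mem_flatHyps_tri hab hac hbc]
    simp only [Finset.mem_insert, Finset.mem_singleton, Subtype.ext_iff]
    constructor
    · rintro (h | h | ⟨h, _⟩)
      · exact Or.inl h
      · exact Or.inr (Or.inl h)
      · exact Or.inr (Or.inr h)
    · rintro (h | h | h)
      · exact Or.inl h
      · exact Or.inr (Or.inl h)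
      · exact Or.inr (Or.inr ⟨h, h3⟩)
  have hcard : (flatHyps (graphArr G) (edgeHyp a b e1 ⊓ edgeHyp b c e2)).card = 3 := by
    rw [hset]
    rw [Finset.card_insert_of_notMem (by simp [h12, h13]),
      Finset.card_insert_of_notMem (by simp [h23]), Finset.card_singleton]
  have := (hη _ (tri_rank2 hab hac hbc h1 h2)).1 (by rw [hcard])
  rw [hset, Finset.sum_insert (by simp [h12, h13]),
    Finset.sum_insert (by simp [h23]), Finset.sum_singleton] at this
  linear_combination this

end Cocycle
section Key0

variable {G : SGraph l} {a b c : Fin l}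
variable {η : {H // H ∈ graphArr G} → ZMod 3}

lemma key_simple (hab : a ≠ b) (hac : a ≠ c) (hbc : b ≠ c)
    (hla : a ∉ G.loops) (hlb : b ∉ G.loops) (hlc : c ∉ G.loops)
    (hd1 : G.hasEdge a b true) (hd2 : G.hasEdge a b false)
    {σ : Bool} (hs : G.hasEdge b c σ) (hs' : ¬ G.hasEdge b c (!σ))
    {τ : Bool} (hτ : G.hasEdge a c τ) (hτ' : ¬ G.hasEdge a c (!τ))
    (hη : IsCocycle 3 (graphArr G) η) :
    (∀ bb (h : G.hasEdge a b bb),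
        η ⟨edgeHyp a b bb, edgeHyp_mem_arr h⟩ = η ⟨edgeHyp a b true, edgeHyp_mem_arr hd1⟩) ∧
    (∀ bb (h : G.hasEdge b c bb),
        η ⟨edgeHyp b c bb, edgeHyp_mem_arr h⟩ = η ⟨edgeHyp a b true, edgeHyp_mem_arr hd1⟩) ∧
    (∀ bb (h : G.hasEdge a c bb),
        η ⟨edgeHyp a c bb, edgeHyp_mem_arr h⟩ = η ⟨edgeHyp a b true, edgeHyp_mem_arr hd1⟩) := by
  have h30 : (3 : ZMod 3) = 0 := by decide
  set V := η ⟨edgeHyp a b true, edgeHyp_mem_arr hd1⟩ with hV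
  have valab : ∀ bb (h : G.hasEdge a b bb),
      η ⟨edgeHyp a b bb, edgeHyp_mem_arr h⟩ = V := by
    intro bb h
    cases bb
    · exact (double_eq hab hla hlb hd1 hd2 hη).symm
    · rfl
  set b1 := xor (!τ) σ with hb1
  have hx1 : xor b1 σ = !τ := by rw [hb1]; cases τ <;> cases σ <;> rfl
  have hx2 : xor (!b1) σ = τ := by rw [hb1]; cases τ <;> cases σ <;> rfl
  have hab_b1 : G.hasEdge a b b1 := by cases b1; exacts [hd2, hd1]
  have hab_b1' : G.hasEdge a b (!b1) := by cases b1; exacts [hd1, hd2]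
  have e_eq := tri_eq hab hac hbc hab_b1 hs (by rw [hx1]; exact hτ') hη
  have vbcσ : η ⟨edgeHyp b c σ, edgeHyp_mem_arr hs⟩ = V := by
    rw [← e_eq]; exact valab b1 hab_b1
  have hsum := tri_sum hab hac hbc hab_b1' hs (by rw [hx2]; exact hτ) hη
  simp only [hx2] at hsum
  have vacτ : η ⟨edgeHyp a c τ, edgeHyp_mem_arr hτ⟩ = V := by
    have h1 := valab (!b1) hab_b1'
    have hVV : V + V + V = 0 := by linear_combination V * h30
    linear_combination hsum - h1 - vbcσ - hVV
  refine ⟨valab, ?_, ?_⟩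
  · intro bb h
    cases bb <;> cases σ
    · exact vbcσ
    · exact absurd h (by simpa using hs')
    · exact absurd h (by simpa using hs')
    · exact vbcσ
  · intro bb h
    cases bb <;> cases τ
    · exact vacτ
    · exact absurd h (by simpa using hτ')
    · exact absurd h (by simpa using hτ')
    · exact vacτ

end Key0
section Key

variable {G : SGraph l} {a b c : Fin l}
variable {η : {H // H ∈ graphArr G} → ZMod 3}

lemma eta_comm {x y : Fin l} {bb : Bool} (h : G.hasEdge x y bb) :
    η ⟨edgeHyp x y bb, edgeHyp_mem_arr h⟩ = η ⟨edgeHyp y x bb, edgeHyp_mem_arr h.symm⟩ :=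
  congrArg η (Subtype.ext (edgeHyp_comm x y bb))

lemma key (hab : a ≠ b) (hac : a ≠ c) (hbc : b ≠ c)
    (hla : a ∉ G.loops) (hlb : b ∉ G.loops) (hlc : c ∉ G.loops)
    (hd1 : G.hasEdge a b true) (hd2 : G.hasEdge a b false)
    {σ : Bool} (hs : G.hasEdge b c σ) (hs' : ¬ G.hasEdge b c (!σ))
    (hacE : ∃ τ, G.hasEdge a c τ)
    (hη : IsCocycle 3 (graphArr G) η) :
    (∀ bb (h : G.hasEdge a b bb),
        η ⟨edgeHyp a b bb, edgeHyp_mem_arr h⟩ = η ⟨edgeHyp a b true, edgeHyp_mem_arr hd1⟩) ∧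
    (∀ bb (h : G.hasEdge b c bb),
        η ⟨edgeHyp b c bb, edgeHyp_mem_arr h⟩ = η ⟨edgeHyp a b true, edgeHyp_mem_arr hd1⟩) ∧
    (∀ bb (h : G.hasEdge a c bb),
        η ⟨edgeHyp a c bb, edgeHyp_mem_arr h⟩ = η ⟨edgeHyp a b true, edgeHyp_mem_arr hd1⟩) := by
  have h30 : (3 : ZMod 3) = 0 := by decide
  set V := η ⟨edgeHyp a b true, edgeHyp_mem_arr hd1⟩ with hV
  have valab : ∀ bb (h : G.hasEdge a b bb),
      η ⟨edgeHyp a b bb, edgeHyp_mem_arr h⟩ = V := by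
    intro bb h
    cases bb
    · exact (double_eq hab hla hlb hd1 hd2 hη).symm
    · rfl
  by_cases hT : G.hasEdge a c true <;> by_cases hF : G.hasEdge a c false
  · -- ac is a double edge
    have hacσ : G.hasEdge a c σ := by cases σ; exacts [hF, hT]
    have hacσ' : G.hasEdge a c (!σ) := by cases σ; exacts [hT, hF]
    have hdouble_ac : η ⟨edgeHyp a c true, edgeHyp_mem_arr hT⟩
        = η ⟨edgeHyp a c false, edgeHyp_mem_arr hF⟩ := double_eq hac hla hlc hT hF hη
    -- triangle b - a - c with signs (true, σ); third pair (b,c) with sign !σ is absent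
    have step1 : η ⟨edgeHyp b a true, edgeHyp_mem_arr hd1.symm⟩
        = η ⟨edgeHyp a c σ, edgeHyp_mem_arr hacσ⟩ := by
      refine tri_eq hab.symm hbc hac hd1.symm hacσ ?_ hη
      simpa using hs'
    have vacσ : η ⟨edgeHyp a c σ, edgeHyp_mem_arr hacσ⟩ = V := by
      rw [← step1]; exact eta_comm (η := η) hd1.symm
    have vac : ∀ bb (h : G.hasEdge a c bb),
        η ⟨edgeHyp a c bb, edgeHyp_mem_arr h⟩ = V := by
      intro bb h
      cases bb <;> cases σ
      · exact vacσ
      · rw [← hdouble_ac]; exact vacσ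
      · rw [hdouble_ac]; exact vacσ
      · exact vacσ
    have hx : xor true σ = !σ := by cases σ <;> rfl
    have hsum := tri_sum hab hac hbc hd1 hs (by rw [hx]; exact hacσ') hη
    simp only [hx] at hsum
    have vbcσ : η ⟨edgeHyp b c σ, edgeHyp_mem_arr hs⟩ = V := by
      have h1 := vac (!σ) hacσ'
      have hVV : V + V + V = 0 := by linear_combination V * h30
      linear_combination hsum - h1 - hVV
    refine ⟨valab, ?_, vac⟩
    intro bb h
    cases bb <;> cases σ
    · exact vbcσ
    · exact absurd h (by simpa using hs')
    · exact absurd h (by simpa using hs')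
    · exact vbcσ
  · -- ac simple with sign true
    exact key_simple hab hac hbc hla hlb hlc hd1 hd2 hs hs' hT (by simpa using hF) hη
  · -- ac simple with sign false
    exact key_simple hab hac hbc hla hlb hlc hd1 hd2 hs hs' hF (by simpa using hT) hη
  · -- no ac edge: contradiction
    obtain ⟨τ, hτ⟩ := hacE
    cases τ
    · exact absurd hτ hF
    · exact absurd hτ hT

end Key
end TriLemma

open TriLemma in
/-- Triangle lemma: if `i, j, k` are distinct vertices of `Γ`, each pair among them is
joined by at least one signed edge, some pair carries a double edge, some pair carries a
simple edge, and there is no loop at `i`, `j` or `k`, then every 3-cocycle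
`η : A(Γ) → 𝔽₃` takes one and the same value on all hyperplanes of `A(Γ)` corresponding
to signed edges between vertices of `{i, j, k}`. -/
theorem triangle_lemma {l : ℕ} (G : SGraph l) (i j k : Fin l)
    (hij : i ≠ j) (hik : i ≠ k) (hjk : j ≠ k)
    (hjoined : ∀ x ∈ ({i, j, k} : Finset (Fin l)), ∀ y ∈ ({i, j, k} : Finset (Fin l)),
      x ≠ y → ∃ ε, G.hasEdge x y ε)
    (hdouble : ∃ x ∈ ({i, j, k} : Finset (Fin l)), ∃ y ∈ ({i, j, k} : Finset (Fin l)),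
      x ≠ y ∧ G.hasEdge x y true ∧ G.hasEdge x y false)
    (hsimple : ∃ x ∈ ({i, j, k} : Finset (Fin l)), ∃ y ∈ ({i, j, k} : Finset (Fin l)),
      x ≠ y ∧ ∃ ε, G.hasEdge x y ε ∧ ¬ G.hasEdge x y (!ε))
    (hloops : i ∉ G.loops ∧ j ∉ G.loops ∧ k ∉ G.loops)
    (η : {H // H ∈ graphArr G} → ZMod 3) (hη : IsCocycle 3 (graphArr G) η) :
    ∀ H K : {H // H ∈ graphArr G},
      fromEdgeIn G ({i, j, k} : Finset (Fin l)) H →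
      fromEdgeIn G ({i, j, k} : Finset (Fin l)) K → η H = η K := by
  classical
  obtain ⟨x, hx, y, hy, hxy, hxyT, hxyF⟩ := hdouble
  obtain ⟨u, hu, v, hv, huv, σ0, hσ, hσ'⟩ := hsimple
  have hxyBoth : ∀ s, G.hasEdge x y s := fun s => by cases s; exacts [hxyF, hxyT]
  have hsetup : ∃ a b c : Fin l, a ∈ ({i, j, k} : Finset (Fin l)) ∧
      b ∈ ({i, j, k} : Finset (Fin l)) ∧ c ∈ ({i, j, k} : Finset (Fin l)) ∧
      a ≠ b ∧ a ≠ c ∧ b ≠ c ∧ G.hasEdge a b true ∧ G.hasEdge a b false ∧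
      ∃ σ : Bool, G.hasEdge b c σ ∧ ¬ G.hasEdge b c (!σ) := by
    by_cases h1 : u = x
    · subst h1
      have hyv : y ≠ v := by
        intro h; subst h; exact hσ' (hxyBoth (!σ0))
      exact ⟨y, u, v, hy, hx, hv, hxy.symm, hyv, huv, hxyT.symm, hxyF.symm, σ0, hσ, hσ'⟩
    · by_cases h2 : u = y
      · subst h2
        have hxv : x ≠ v := by
          intro h; subst h; exact hσ' ((hxyBoth (!σ0)).symm)
        exact ⟨x, u, v, hx, hy, hv, hxy, hxv, huv, hxyT, hxyF, σ0, hσ, hσ'⟩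
      · by_cases h3 : v = x
        · subst h3
          have hyu : y ≠ u := fun h => h2 h.symm
          exact ⟨y, v, u, hy, hx, hu, hxy.symm, hyu, fun h => huv h.symm,
            hxyT.symm, hxyF.symm, σ0, hσ.symm, fun h => hσ' h.symm⟩
        · by_cases h4 : v = y
          · subst h4
            have hxu : x ≠ u := fun h => h1 h.symm
            exact ⟨x, v, u, hx, hy, hu, hxy, hxu, fun h => huv h.symm,
              hxyT, hxyF, σ0, hσ.symm, fun h => hσ' h.symm⟩
          · exfalso
            simp only [Finset.mem_insert, Finset.mem_singleton] at hx hy hu hv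
            rcases hx with rfl | rfl | rfl <;> rcases hy with rfl | rfl | rfl <;>
              rcases hu with rfl | rfl | rfl <;> rcases hv with rfl | rfl | rfl <;>
              simp_all
  obtain ⟨a, b, c, ha, hb, hc, hab, hac, hbc, hd1, hd2, σ, hbcσ, hbcσ'⟩ := hsetup
  have hnl : ∀ t ∈ ({i, j, k} : Finset (Fin l)), t ∉ G.loops := by
    intro t ht
    simp only [Finset.mem_insert, Finset.mem_singleton] at ht
    rcases ht with rfl | rfl | rfl
    exacts [hloops.1, hloops.2.1, hloops.2.2]
  obtain ⟨K1, K2, K3⟩ := key hab hac hbc (hnl a ha) (hnl b hb) (hnl c hc) hd1 hd2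
    hbcσ hbcσ' (hjoined a ha c hc hac) hη
  have hS3 : ({i, j, k} : Finset (Fin l)).card = 3 := by
    rw [Finset.card_insert_of_notMem (by simp [hij, hik]),
      Finset.card_insert_of_notMem (by simp [hjk]), Finset.card_singleton]
  have habc3 : ({a, b, c} : Finset (Fin l)).card = 3 := by
    rw [Finset.card_insert_of_notMem (by simp [hab, hac]),
      Finset.card_insert_of_notMem (by simp [hbc]), Finset.card_singleton]
  have hsub : ({a, b, c} : Finset (Fin l)) ⊆ {i, j, k} := by
    simp [Finset.insert_subset_iff, ha, hb, hc]
  have hSeq : ({a, b, c} : Finset (Fin l)) = {i, j, k} :=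
    Finset.eq_of_subset_of_card_le hsub (by rw [hS3, habc3])
  have hmem : ∀ t ∈ ({i, j, k} : Finset (Fin l)), t = a ∨ t = b ∨ t = c := by
    intro t ht
    rw [← hSeq] at ht
    simpa using ht
  suffices hall : ∀ H, fromEdgeIn G ({i, j, k} : Finset (Fin l)) H →
      η H = η ⟨edgeHyp a b true, edgeHyp_mem_arr hd1⟩ by
    intro H K h1 h2
    rw [hall H h1, hall K h2]
  intro H hH
  obtain ⟨⟨p, q, bb⟩, he, hpS, hqS, hHval⟩ := hH
  dsimp only at hpS hqS hHval
  have hpq : p ≠ q := Fin.ne_of_lt (G.edges_lt _ he)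
  have hE : G.hasEdge p q bb := Or.inl he
  have hHeq : H = ⟨edgeHyp p q bb, edgeHyp_mem_arr hE⟩ := Subtype.ext hHval
  rw [hHeq]
  rcases hmem p hpS with rfl | rfl | rfl <;> rcases hmem q hqS with rfl | rfl | rfl
  · exact absurd rfl hpq
  · exact K1 bb hE
  · exact K3 bb hE
  · rw [eta_comm (η := η) hE]; exact K1 bb hE.symm
  · exact absurd rfl hpq
  · exact K2 bb hE
  · rw [eta_comm (η := η) hE]; exact K3 bb hE.symm
  · rw [eta_comm (η := η) hE]; exact K2 bb hE.symm
  · exact absurd rfl hpq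
end
end

section
/- Let Γ be a graph whose underlying unsigned graph Γ̄ is the complete graph on a 4-element vertex set V (every pair of distinct vertices of V is joined by at least one signed edge, and every signed edge of Γ has both endpoints in V). Let Γ' be the full subgraph of Γ determined by a 3-element subset V' ⊆ V, i.e., the graph whose signed edges are all signed edges of Γ with both endpoints in V'. If a 3-cocycle η : A(Γ) → 𝔽_3 takes one and the same value on all hyperplanes corresponding to signed edges of Γ', then η takes one and the same value on all hyperplanes corresponding to signed edges of Γ. -/
/-! An edge of `Γ` not in `Γ'` has at most one endpoint in `V'`, so the two other vertices of
`V'` carry an edge `f` disjoint from it. Two edges on disjoint vertex pairs meet in a rank-2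
flat lying on no other hyperplane of `A(Γ)`: vectors supported on one of the edges, or on a
single coordinate, lie in the flat and separate it from every other loop and edge. Hence
`m_X = 2` is prime to `3`, and the cocycle condition makes `η` agree on the two edges. -/

open scoped Classical

noncomputable section

def edgeSign (b : Bool) : ℂ := if b then 1 else -1

lemma edgeSign_ne_zero (b : Bool) : edgeSign b ≠ 0 := by
  cases b <;> norm_num [edgeSign]

section Hyperplanes

variable {l : ℕ} {i j m n : Fin l} {b q : Bool} {x : Fin l → ℂ}

lemma mem_edgeHyp : x ∈ edgeHyp i j b ↔ x i + edgeSign b * x j = 0 := by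
  cases b <;> simp [edgeHyp, edgeSign]

lemma mem_loopHyp : x ∈ loopHyp i ↔ x i = 0 := by
  simp [loopHyp]

lemma apply_eq_zero_iff_of_mem_edgeHyp (hx : x ∈ edgeHyp i j b) : x i = 0 ↔ x j = 0 := by
  rw [mem_edgeHyp] at hx
  constructor <;> intro h <;> simp_all [edgeSign_ne_zero]

lemma mem_edgeHyp_of_apply_eq_zero (hi : x i = 0) (hj : x j = 0) : x ∈ edgeHyp i j b := by
  simp [mem_edgeHyp, hi, hj]

lemma single_mem_edgeHyp (hi : m ≠ i) (hj : m ≠ j) : Pi.single m 1 ∈ edgeHyp i j b :=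
  mem_edgeHyp_of_apply_eq_zero (by simp [Ne.symm hi]) (by simp [Ne.symm hj])

lemma single_notMem_edgeHyp (hmn : m ≠ n) : Pi.single m 1 ∉ edgeHyp m n b := fun h => by
  simpa [Ne.symm hmn] using apply_eq_zero_iff_of_mem_edgeHyp h

def edgeVec (i j : Fin l) (b : Bool) : Fin l → ℂ :=
  fun t => if t = i then 1 else if t = j then -edgeSign b else 0

lemma edgeVec_apply_eq_zero_iff (hij : i ≠ j) {t : Fin l} :
    edgeVec i j b t = 0 ↔ t ≠ i ∧ t ≠ j := by
  unfold edgeVec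
  split_ifs <;> simp_all [edgeSign_ne_zero]

lemma edgeVec_mem_edgeHyp_iff (hij : i ≠ j) : edgeVec i j b ∈ edgeHyp i j q ↔ q = b := by
  rw [mem_edgeHyp]
  simp only [edgeVec, if_neg hij.symm]
  cases q <;> cases b <;> norm_num [edgeSign]

lemma edgeVec_mem_edgeHyp_of_ne (hi : m ≠ i) (hj : m ≠ j) (hi' : n ≠ i) (hj' : n ≠ j) :
    edgeVec i j b ∈ edgeHyp m n q :=
  mem_edgeHyp_of_apply_eq_zero (by simp [edgeVec, hi, hj]) (by simp [edgeVec, hi', hj'])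

lemma eq_of_edgeVec_mem_edgeHyp (hij : i < j) (hmn : m < n)
    (hv : edgeVec i j b ∈ edgeHyp m n q) (hm : m = i ∨ m = j) : m = i ∧ n = j ∧ q = b := by
  have hn : n = i ∨ n = j := by
    have := apply_eq_zero_iff_of_mem_edgeHyp hv
    rw [edgeVec_apply_eq_zero_iff hij.ne, edgeVec_apply_eq_zero_iff hij.ne] at this
    tauto
  obtain ⟨rfl, rfl⟩ : m = i ∧ n = j := by
    rcases hm with rfl | rfl <;> rcases hn with rfl | rfl <;> simp_all [lt_asymm hij]
  exact ⟨rfl, rfl, (edgeVec_mem_edgeHyp_iff hij.ne).1 hv⟩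

end Hyperplanes

section DisjointEdges

variable {l : ℕ} {a₁ a₂ b₁ b₂ : Fin l} {ε δ : Bool}

lemma edgeHyp_ne_edgeHyp (ha : a₁ ≠ a₂) (h₁₁ : a₁ ≠ b₁) (h₁₂ : a₁ ≠ b₂) :
    edgeHyp a₁ a₂ ε ≠ edgeHyp b₁ b₂ δ := fun h =>
  single_notMem_edgeHyp ha (h ▸ single_mem_edgeHyp h₁₁ h₁₂)

lemma edgeVec_mem_edgeHyp_inf (ha : a₁ ≠ a₂) (h₁₁ : b₁ ≠ a₁) (h₂₁ : b₁ ≠ a₂)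
    (h₁₂ : b₂ ≠ a₁) (h₂₂ : b₂ ≠ a₂) :
    edgeVec a₁ a₂ ε ∈ edgeHyp a₁ a₂ ε ⊓ edgeHyp b₁ b₂ δ :=
  ⟨(edgeVec_mem_edgeHyp_iff ha).2 rfl, edgeVec_mem_edgeHyp_of_ne h₁₁ h₂₁ h₁₂ h₂₂⟩

lemma edgeHyp_inf_not_le_loopHyp (ha : a₁ ≠ a₂) (hb : b₁ ≠ b₂) (h₁₁ : a₁ ≠ b₁)
    (h₁₂ : a₁ ≠ b₂) (h₂₁ : a₂ ≠ b₁) (h₂₂ : a₂ ≠ b₂) (i : Fin l) :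
    ¬ edgeHyp a₁ a₂ ε ⊓ edgeHyp b₁ b₂ δ ≤ loopHyp i := by
  intro hle
  by_cases hiA : i = a₁ ∨ i = a₂
  · have := mem_loopHyp.1 (hle (edgeVec_mem_edgeHyp_inf ha h₁₁.symm h₂₁.symm h₁₂.symm h₂₂.symm))
    rw [edgeVec_apply_eq_zero_iff ha] at this
    tauto
  by_cases hiB : i = b₁ ∨ i = b₂
  · have := mem_loopHyp.1 (hle (inf_comm (edgeHyp a₁ a₂ ε) _ ▸
      edgeVec_mem_edgeHyp_inf hb h₁₁ h₁₂ h₂₁ h₂₂))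
    rw [edgeVec_apply_eq_zero_iff hb] at this
    tauto
  push Not at hiA hiB
  simpa using mem_loopHyp.1
    (hle ⟨single_mem_edgeHyp hiA.1 hiA.2, single_mem_edgeHyp (b := δ) hiB.1 hiB.2⟩)

lemma eq_of_edgeHyp_inf_le_edgeHyp (ha : a₁ < a₂) (hb : b₁ < b₂) (h₁₁ : a₁ ≠ b₁)
    (h₁₂ : a₁ ≠ b₂) (h₂₁ : a₂ ≠ b₁) (h₂₂ : a₂ ≠ b₂) {m n : Fin l} {q : Bool} (hmn : m < n)
    (hle : edgeHyp a₁ a₂ ε ⊓ edgeHyp b₁ b₂ δ ≤ edgeHyp m n q) :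
    (m = a₁ ∧ n = a₂ ∧ q = ε) ∨ (m = b₁ ∧ n = b₂ ∧ q = δ) := by
  by_cases hmA : m = a₁ ∨ m = a₂
  · exact .inl <| eq_of_edgeVec_mem_edgeHyp ha hmn
      (hle (edgeVec_mem_edgeHyp_inf ha.ne h₁₁.symm h₂₁.symm h₁₂.symm h₂₂.symm)) hmA
  by_cases hmB : m = b₁ ∨ m = b₂
  · exact .inr <| eq_of_edgeVec_mem_edgeHyp hb hmn
      (hle (inf_comm (edgeHyp a₁ a₂ ε) _ ▸ edgeVec_mem_edgeHyp_inf hb.ne h₁₁ h₁₂ h₂₁ h₂₂)) hmB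
  push Not at hmA hmB
  exact absurd (hle ⟨single_mem_edgeHyp hmA.1 hmA.2, single_mem_edgeHyp hmB.1 hmB.2⟩)
    (single_notMem_edgeHyp hmn.ne)

end DisjointEdges

lemma IsCocycle.eq_of_not_dvd_card {l p : ℕ} {A : Finset (Hyp l)} {η : {H // H ∈ A} → ZMod p}
    (hη : IsCocycle p A η) {H K : {H // H ∈ A}} (hHK : H ≠ K)
    (hp : ¬ p ∣ (flatHyps A ((H : Hyp l) ⊓ K)).card) : η H = η K :=
  (hη _ ⟨H, H.2, K, K.2, fun h => hHK (Subtype.ext h), rfl⟩).2 hp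
    H (by simp [flatHyps]) K (by simp [flatHyps])

namespace SGraph

variable {l : ℕ} (G : SGraph l)

def hyp {e : Fin l × Fin l × Bool} (he : e ∈ G.edges) : {H // H ∈ graphArr G} :=
  ⟨edgeHyp e.1 e.2.1 e.2.2, Finset.mem_union_right _ (Finset.mem_image_of_mem _ he)⟩

variable {G} {e f : Fin l × Fin l × Bool}

lemma flatHyps_hyp_inf_hyp (he : e ∈ G.edges) (hf : f ∈ G.edges) (h₁₁ : e.1 ≠ f.1)
    (h₁₂ : e.1 ≠ f.2.1) (h₂₁ : e.2.1 ≠ f.1) (h₂₂ : e.2.1 ≠ f.2.1) :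
    flatHyps (graphArr G) ((G.hyp he : Hyp l) ⊓ G.hyp hf) = {G.hyp he, G.hyp hf} := by
  have hea := G.edges_lt e he
  have hfb := G.edges_lt f hf
  ext L
  simp only [flatHyps, Finset.mem_filter, Finset.mem_attach, true_and, Finset.mem_insert,
    Finset.mem_singleton]
  constructor
  · obtain ⟨L, hL⟩ := L
    intro hle
    rcases Finset.mem_union.1 hL with hL | hL <;> obtain ⟨g, hg, rfl⟩ := Finset.mem_image.1 hL
    · exact absurd hle (edgeHyp_inf_not_le_loopHyp hea.ne hfb.ne h₁₁ h₁₂ h₂₁ h₂₂ g)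
    · rcases eq_of_edgeHyp_inf_le_edgeHyp hea hfb h₁₁ h₁₂ h₂₁ h₂₂ (G.edges_lt g hg) hle with
        ⟨h₁, h₂, h₃⟩ | ⟨h₁, h₂, h₃⟩
      · left; simp [hyp, h₁, h₂, h₃]
      · right; simp [hyp, h₁, h₂, h₃]
  · rintro (rfl | rfl)
    exacts [inf_le_left, inf_le_right]

lemma _root_.IsCocycle.eq_of_disjoint_edges {p : ℕ} (hp : ¬ p ∣ 2)
    {η : {H // H ∈ graphArr G} → ZMod p} (hη : IsCocycle p (graphArr G) η)
    (he : e ∈ G.edges) (hf : f ∈ G.edges) (h₁₁ : e.1 ≠ f.1) (h₁₂ : e.1 ≠ f.2.1)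
    (h₂₁ : e.2.1 ≠ f.1) (h₂₂ : e.2.1 ≠ f.2.1) :
    η (G.hyp he) = η (G.hyp hf) := by
  have hne : G.hyp he ≠ G.hyp hf := fun h =>
    edgeHyp_ne_edgeHyp (G.edges_lt e he).ne h₁₁ h₁₂ (congrArg Subtype.val h)
  apply hη.eq_of_not_dvd_card hne
  rwa [flatHyps_hyp_inf_hyp he hf h₁₁ h₁₂ h₂₁ h₂₂, Finset.card_pair hne]

lemma exists_edge_of_hasEdge {x y : Fin l} {ε : Bool} (h : G.hasEdge x y ε) :
    ∃ f ∈ G.edges, (f.1 = x ∧ f.2.1 = y) ∨ (f.1 = y ∧ f.2.1 = x) := by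
  rcases h with h | h
  exacts [⟨_, h, .inl ⟨rfl, rfl⟩⟩, ⟨_, h, .inr ⟨rfl, rfl⟩⟩]

lemma exists_edge_disjoint {S : Finset (Fin l)} (hS : 3 ≤ S.card)
    (hcomplete : ∀ x ∈ S, ∀ y ∈ S, x ≠ y → ∃ ε, G.hasEdge x y ε) {a b : Fin l}
    (hab : ¬ (a ∈ S ∧ b ∈ S)) :
    ∃ f ∈ G.edges, f.1 ∈ S ∧ f.2.1 ∈ S ∧ a ≠ f.1 ∧ a ≠ f.2.1 ∧ b ≠ f.1 ∧ b ≠ f.2.1 := by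
  have hcard : 1 < ((S.erase a).erase b).card := by
    by_cases ha : a ∈ S
    · rw [Finset.erase_eq_of_notMem (fun h => hab ⟨ha, Finset.mem_of_mem_erase h⟩),
        Finset.card_erase_of_mem ha]
      omega
    · rw [Finset.erase_eq_of_notMem ha]
      have := Finset.pred_card_le_card_erase (s := S) (a := b)
      omega
  obtain ⟨y, hy, z, hz, hyz⟩ := Finset.one_lt_card.1 hcard
  simp only [Finset.mem_erase] at hy hz
  obtain ⟨ε, hε⟩ := hcomplete y hy.2.2 z hz.2.2 hyz
  obtain ⟨f, hf, ⟨h₁, h₂⟩ | ⟨h₁, h₂⟩⟩ := exists_edge_of_hasEdge hε <;>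
    exact ⟨f, hf, by simp_all [eq_comm]⟩

lemma exists_edge_eta_eq {S : Finset (Fin l)} (hS : 3 ≤ S.card)
    (hcomplete : ∀ x ∈ S, ∀ y ∈ S, x ≠ y → ∃ ε, G.hasEdge x y ε)
    {η : {H // H ∈ graphArr G} → ZMod 3} (hη : IsCocycle 3 (graphArr G) η)
    (he : e ∈ G.edges) : ∃ f, ∃ hf : f ∈ G.edges, f.1 ∈ S ∧ f.2.1 ∈ S ∧
      η (G.hyp he) = η (G.hyp hf) := by
  by_cases hS' : e.1 ∈ S ∧ e.2.1 ∈ S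
  · exact ⟨e, he, hS'.1, hS'.2, rfl⟩
  obtain ⟨f, hf, hf₁, hf₂, h₁₁, h₁₂, h₂₁, h₂₂⟩ := exists_edge_disjoint hS hcomplete hS'
  exact ⟨f, hf, hf₁, hf₂, hη.eq_of_disjoint_edges (by decide) he hf h₁₁ h₁₂ h₂₁ h₂₂⟩

end SGraph

theorem full_subgraph_lemma_general {l : ℕ} (G : SGraph l) (V V' : Finset (Fin l))
    (hcomplete : ∀ x ∈ V, ∀ y ∈ V, x ≠ y → ∃ ε, G.hasEdge x y ε)
    (hsub : V' ⊆ V) (hV' : V'.card = 3)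
    (η : {H // H ∈ graphArr G} → ZMod 3) (hη : IsCocycle 3 (graphArr G) η)
    (hconst : ∀ H K : {H // H ∈ graphArr G},
      fromEdgeIn G V' H → fromEdgeIn G V' K → η H = η K) :
    ∀ H K : {H // H ∈ graphArr G},
      fromEdgeIn G V H → fromEdgeIn G V K → η H = η K := by
  rintro H K ⟨e, he, -, -, hHe⟩ ⟨f, hf, -, -, hKf⟩
  have hcomplete' : ∀ x ∈ V', ∀ y ∈ V', x ≠ y → ∃ ε, G.hasEdge x y ε :=
    fun x hx y hy => hcomplete x (hsub hx) y (hsub hy)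
  obtain ⟨e', he', he'₁, he'₂, hee'⟩ := G.exists_edge_eta_eq hV'.ge hcomplete' hη he
  obtain ⟨f', hf', hf'₁, hf'₂, hff'⟩ := G.exists_edge_eta_eq hV'.ge hcomplete' hη hf
  calc η H = η (G.hyp he) := congrArg η (Subtype.ext hHe)
    _ = η (G.hyp he') := hee'
    _ = η (G.hyp hf') := hconst _ _ ⟨e', he', he'₁, he'₂, rfl⟩ ⟨f', hf', hf'₁, hf'₂, rfl⟩
    _ = η (G.hyp hf) := hff'.symm
    _ = η K := congrArg η (Subtype.ext hKf).symm

/-- Let `Γ` be a graph whose underlying unsigned graph is the complete graph on a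
4-element vertex set `V`, and let `V' ⊆ V` be a 3-element subset. If a 3-cocycle
`η : A(Γ) → 𝔽₃` takes one and the same value on all hyperplanes corresponding to signed
edges of the full subgraph on `V'`, then `η` takes one and the same value on all
hyperplanes corresponding to signed edges of `Γ`. -/
theorem full_subgraph_lemma {l : ℕ} (G : SGraph l) (V V' : Finset (Fin l))
    (hV : V.card = 4)
    (hcomplete : ∀ x ∈ V, ∀ y ∈ V, x ≠ y → ∃ ε, G.hasEdge x y ε)
    (hedges : ∀ e ∈ G.edges, e.1 ∈ V ∧ e.2.1 ∈ V)
    (hsub : V' ⊆ V) (hV' : V'.card = 3)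
    (η : {H // H ∈ graphArr G} → ZMod 3) (hη : IsCocycle 3 (graphArr G) η)
    (hconst : ∀ H K : {H // H ∈ graphArr G},
      fromEdgeIn G V' H → fromEdgeIn G V' K → η H = η K) :
    ∀ H K : {H // H ∈ graphArr G},
      fromEdgeIn G V H → fromEdgeIn G V K → η H = η K :=
  full_subgraph_lemma_general G V V' hcomplete hsub hV' η hη hconst
end
end

section
/- Fix an integer v ≥ 5. There is no function α assigning an integer α_{ij} to each unordered pair {i, j} of distinct elements of {1,…,v} such that α_{ij} + α_{jk} + α_{ik} ≥ 1 for all triples of pairwise distinct i, j, k in {1,…,v}, and 6·Σ_{1 ≤ i < j ≤ v} α_{ij} = v(v−1). -/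
open Finset

/-- For `v ≥ 5`, there is no assignment `α` of an integer to each unordered pair of
distinct elements of `{1,…,v}` such that `α_{ij} + α_{jk} + α_{ik} ≥ 1` for all triples
of pairwise distinct `i, j, k`, and `6·Σ_{i<j} α_{ij} = v(v-1)`. -/
theorem no_admissible_shift (v : ℕ) (hv : 5 ≤ v) :
    ¬ ∃ α : Finset (Fin v) → ℤ,
      (∀ i j k : Fin v, i ≠ j → j ≠ k → i ≠ k →
        1 ≤ α {i, j} + α {j, k} + α {i, k}) ∧
      6 * ∑ q ∈ Finset.univ.filter (fun q : Fin v × Fin v => q.1 < q.2), α {q.1, q.2}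
        = (v : ℤ) * ((v : ℤ) - 1) := by
  rintro ⟨α, h1, h2⟩
  set S : ℤ := ∑ q ∈ Finset.univ.filter (fun q : Fin v × Fin v => q.1 < q.2), α {q.1, q.2}
    with hS
  -- ordered distinct pairs
  set P : Finset (Fin v × Fin v) := Finset.univ.filter (fun p : Fin v × Fin v => p.1 ≠ p.2)
    with hP
  -- the sum over ordered distinct pairs is twice the sum over increasing pairs
  have key2 : ∑ p ∈ P, α {p.1, p.2} = 2 * S := by
    have hsplit : P = (Finset.univ.filter (fun p : Fin v × Fin v => p.1 < p.2)) ∪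
        (Finset.univ.filter (fun p : Fin v × Fin v => p.2 < p.1)) := by
      ext p
      simp only [hP, mem_filter, mem_union, mem_univ, true_and]
      constructor
      · intro h; exact lt_or_gt_of_ne h
      · rintro (h | h)
        · exact ne_of_lt h
        · exact (ne_of_lt h).symm
    have hdisj : Disjoint (Finset.univ.filter (fun p : Fin v × Fin v => p.1 < p.2))
        (Finset.univ.filter (fun p : Fin v × Fin v => p.2 < p.1)) := by
      rw [Finset.disjoint_left]
      intro p hp hq
      simp only [mem_filter] at hp hq
      exact absurd hq.2 (not_lt_of_gt hp.2)
    rw [hsplit, Finset.sum_union hdisj]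
    have hswap : ∑ p ∈ Finset.univ.filter (fun p : Fin v × Fin v => p.2 < p.1), α {p.1, p.2}
        = S := by
      rw [hS]
      refine Finset.sum_nbij' (i := fun p => (p.2, p.1)) (j := fun p => (p.2, p.1))
        ?_ ?_ ?_ ?_ ?_
      · intro p hp; simp only [mem_filter, mem_univ, true_and] at hp ⊢; exact hp
      · intro p hp; simp only [mem_filter, mem_univ, true_and] at hp ⊢; exact hp
      · intro p _; rfl
      · intro p _; rfl
      · intro p _; rw [Finset.pair_comm]
    rw [hswap]; ring
  -- ordered distinct triples
  set D : Finset ((Fin v × Fin v) × Fin v) :=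
    Finset.univ.filter (fun q => q.1.1 ≠ q.1.2 ∧ q.1.2 ≠ q.2 ∧ q.1.1 ≠ q.2) with hD
  have hDmem : ∀ q : (Fin v × Fin v) × Fin v,
      q ∈ D ↔ q.1 ∈ P ∧ q.2 ∈ (Finset.univ \ {q.1.1, q.1.2} : Finset (Fin v)) := by
    intro q
    simp only [hD, hP, mem_filter, mem_univ, true_and, mem_sdiff, mem_insert,
      mem_singleton, not_or]
    constructor
    · rintro ⟨a, b, c⟩; exact ⟨a, fun h => c h.symm, fun h => b h.symm⟩
    · rintro ⟨a, b, c⟩; exact ⟨a, fun h => c h.symm, fun h => b h.symm⟩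
  have hcard : ∀ p : Fin v × Fin v, p.1 ≠ p.2 →
      ((Finset.univ \ {p.1, p.2} : Finset (Fin v)).card : ℤ) = (v : ℤ) - 2 := by
    intro p hp
    rw [Finset.card_sdiff_of_subset (Finset.subset_univ _)]
    rw [Finset.card_insert_of_notMem (by simpa using hp), Finset.card_singleton,
      Finset.card_univ, Fintype.card_fin]
    have : 2 ≤ v := by omega
    push_cast [Nat.cast_sub this]
    ring
  -- the basic double-counting identity
  have key1a : ∑ q ∈ D, α {q.1.1, q.1.2} = ((v : ℤ) - 2) * ∑ p ∈ P, α {p.1, p.2} := by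
    rw [Finset.sum_finset_product D P (fun p => Finset.univ \ {p.1, p.2}) hDmem
      (f := fun q => α {q.1.1, q.1.2}), Finset.mul_sum]
    apply Finset.sum_congr rfl
    intro p hp
    simp only [hP, mem_filter] at hp
    calc ∑ _a ∈ (Finset.univ \ {p.1, p.2} : Finset (Fin v)), α {p.1, p.2}
        = ((Finset.univ \ {p.1, p.2} : Finset (Fin v)).card : ℤ) * α {p.1, p.2} := by
          rw [Finset.sum_const, nsmul_eq_mul]
      _ = ((v : ℤ) - 2) * α {p.1, p.2} := by rw [hcard p hp.2]
  have key1b : ∑ _q ∈ D, (1 : ℤ) = ((v : ℤ) - 2) * ∑ _p ∈ P, (1 : ℤ) := by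
    rw [Finset.sum_finset_product D P (fun p => Finset.univ \ {p.1, p.2}) hDmem
      (f := fun _ => (1 : ℤ)), Finset.mul_sum]
    apply Finset.sum_congr rfl
    intro p hp
    simp only [hP, mem_filter] at hp
    rw [Finset.sum_const, nsmul_eq_mul, mul_one, mul_one, hcard p hp.2]
  -- reindexing: the other two edge-sums over D equal the first one
  have key3 : ∑ q ∈ D, α {q.1.2, q.2} = ∑ q ∈ D, α {q.1.1, q.1.2} := by
    refine Finset.sum_nbij' (i := fun q => ((q.1.2, q.2), q.1.1))
      (j := fun q => ((q.2, q.1.1), q.1.2)) ?_ ?_ ?_ ?_ ?_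
    · intro q hq; simp only [hD, mem_filter, mem_univ, true_and] at hq ⊢
      exact ⟨hq.2.1, Ne.symm hq.2.2, Ne.symm hq.1⟩
    · intro q hq; simp only [hD, mem_filter, mem_univ, true_and] at hq ⊢
      exact ⟨Ne.symm hq.2.2, hq.1, Ne.symm hq.2.1⟩
    · intro q _; rfl
    · intro q _; rfl
    · intro q _; rfl
  have key4 : ∑ q ∈ D, α {q.1.1, q.2} = ∑ q ∈ D, α {q.1.1, q.1.2} := by
    refine Finset.sum_nbij' (i := fun q => ((q.1.1, q.2), q.1.2))
      (j := fun q => ((q.1.1, q.2), q.1.2)) ?_ ?_ ?_ ?_ ?_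
    · intro q hq; simp only [hD, mem_filter, mem_univ, true_and] at hq ⊢
      exact ⟨hq.2.2, Ne.symm hq.2.1, hq.1⟩
    · intro q hq; simp only [hD, mem_filter, mem_univ, true_and] at hq ⊢
      exact ⟨hq.2.2, Ne.symm hq.2.1, hq.1⟩
    · intro q _; rfl
    · intro q _; rfl
    · intro q _; rfl
  -- the count of ordered distinct pairs
  have keyP1 : ∑ _p ∈ P, (1 : ℤ) = (v : ℤ) * ((v : ℤ) - 1) := by
    rw [Finset.sum_const, nsmul_eq_mul, mul_one]
    have hPd : P = (Finset.univ : Finset (Fin v)).offDiag := by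
      ext p
      simp [hP, Finset.mem_offDiag]
    rw [hPd, Finset.offDiag_card, Finset.card_univ, Fintype.card_fin]
    have hvv : v ≤ v * v := by nlinarith
    rw [Nat.cast_sub hvv]
    push_cast
    ring
  -- total sum over D of the triangle expressions
  have sumf : ∑ q ∈ D, (α {q.1.1, q.1.2} + α {q.1.2, q.2} + α {q.1.1, q.2})
      = 3 * (((v : ℤ) - 2) * (2 * S)) := by
    rw [Finset.sum_add_distrib, Finset.sum_add_distrib, key3, key4, key1a, key2]
    ring
  have sum1 : ∑ _q ∈ D, (1 : ℤ) = ((v : ℤ) - 2) * ((v : ℤ) * ((v : ℤ) - 1)) := by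
    rw [key1b, keyP1]
  have hzero : ∑ q ∈ D,
      (α {q.1.1, q.1.2} + α {q.1.2, q.2} + α {q.1.1, q.2} - 1) = 0 := by
    rw [Finset.sum_sub_distrib, sumf, sum1]
    linear_combination ((v : ℤ) - 2) * h2
  have hone : ∀ a b c : Fin v, a ≠ b → b ≠ c → a ≠ c →
      α {a, b} + α {b, c} + α {a, c} = 1 := by
    intro a b c hab hbc hac
    have hmem : ((a, b), c) ∈ D := by
      simp only [hD, mem_filter, mem_univ, true_and]
      exact ⟨hab, hbc, hac⟩
    have h0 := (Finset.sum_eq_zero_iff_of_nonneg (fun q hq => by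
      simp only [hD, mem_filter, mem_univ, true_and] at hq
      have := h1 q.1.1 q.1.2 q.2 hq.1 hq.2.1 hq.2.2
      omega)).1 hzero ((a, b), c) hmem
    simp only at h0
    omega
  -- five distinct points
  have h0v : (0 : ℕ) < v := by omega
  have h1v : (1 : ℕ) < v := by omega
  have h2v : (2 : ℕ) < v := by omega
  have h3v : (3 : ℕ) < v := by omega
  have h4v : (4 : ℕ) < v := by omega
  set e0 : Fin v := ⟨0, h0v⟩
  set e1 : Fin v := ⟨1, h1v⟩
  set e2 : Fin v := ⟨2, h2v⟩
  set e3 : Fin v := ⟨3, h3v⟩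
  set e4 : Fin v := ⟨4, h4v⟩
  have ne01 : e0 ≠ e1 := by simp [e0, e1, Fin.ext_iff]
  have ne02 : e0 ≠ e2 := by simp [e0, e2, Fin.ext_iff]
  have ne03 : e0 ≠ e3 := by simp [e0, e3, Fin.ext_iff]
  have ne04 : e0 ≠ e4 := by simp [e0, e4, Fin.ext_iff]
  have ne12 : e1 ≠ e2 := by simp [e1, e2, Fin.ext_iff]
  have ne13 : e1 ≠ e3 := by simp [e1, e3, Fin.ext_iff]
  have ne14 : e1 ≠ e4 := by simp [e1, e4, Fin.ext_iff]
  have ne23 : e2 ≠ e3 := by simp [e2, e3, Fin.ext_iff]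
  have ne24 : e2 ≠ e4 := by simp [e2, e4, Fin.ext_iff]
  have ne34 : e3 ≠ e4 := by simp [e3, e4, Fin.ext_iff]
  have t012 := hone e0 e1 e2 ne01 ne12 ne02
  have t013 := hone e0 e1 e3 ne01 ne13 ne03
  have t014 := hone e0 e1 e4 ne01 ne14 ne04
  have t023 := hone e0 e2 e3 ne02 ne23 ne03
  have t024 := hone e0 e2 e4 ne02 ne24 ne04
  have t034 := hone e0 e3 e4 ne03 ne34 ne04
  have t123 := hone e1 e2 e3 ne12 ne23 ne13
  have t124 := hone e1 e2 e4 ne12 ne24 ne14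
  have t134 := hone e1 e3 e4 ne13 ne34 ne14
  have t234 := hone e2 e3 e4 ne23 ne34 ne24
  omega
end
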